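/- arXiv:1804.01179 — 9 statements merged into one kernel-verified Lean document; each statement's English description precedes it below -/
import Mathlib

section
/- Let g : U → ℝ^{n+1} be a smooth map on an open set U ⊆ ℝ², smooth functions a, b on U, with g satisfying g_{uv} + a g_v + b g = 0, and let φ be a nowhere vanishing smooth solution of φ_{uv} − (a + b_u/b) φ_v + b φ = 0, where b is nowhere zero. Then the overdetermined system h_u = φ g, h_v = −b⁻¹ φ_v g_v is integrable, i.e., ∂_v(φ g) = ∂_u(−b⁻¹ φ_v g_v) on U. -/
open scoped RealInnerProductSpace

/-- Integrability of the system `h_u = φ g`, `h_v = −b⁻¹ φ_v g_v`: if `g` satisfies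
`g_{uv} + a g_v + b g = 0` and `φ` is a nowhere vanishing solution of
`φ_{uv} − (a + b_u/b) φ_v + b φ = 0` with `b` nowhere zero, then
`∂_v (φ g) = ∂_u (−b⁻¹ φ_v g_v)` on `U`. -/
theorem stmt_4 {n : ℕ} (U : Set (ℝ × ℝ)) (hU : IsOpen U)
    (g gu gv guv : ℝ × ℝ → EuclideanSpace ℝ (Fin (n + 1)))
    (a b bu φ φv φuv : ℝ × ℝ → ℝ)
    (hg : ContDiffOn ℝ (⊤ : ℕ∞) g U) (ha : ContDiffOn ℝ (⊤ : ℕ∞) a U) (hbs : ContDiffOn ℝ (⊤ : ℕ∞) b U)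
    (hφs : ContDiffOn ℝ (⊤ : ℕ∞) φ U)
    (hgu : ∀ p ∈ U, HasDerivAt (fun u => g (u, p.2)) (gu p) p.1)
    (hgv : ∀ p ∈ U, HasDerivAt (fun v => g (p.1, v)) (gv p) p.2)
    (hguv : ∀ p ∈ U, HasDerivAt (fun v => gu (p.1, v)) (guv p) p.2)
    (hbu : ∀ p ∈ U, HasDerivAt (fun u => b (u, p.2)) (bu p) p.1)
    (hφv : ∀ p ∈ U, HasDerivAt (fun v => φ (p.1, v)) (φv p) p.2)
    (hφuv : ∀ p ∈ U, HasDerivAt (fun u => φv (u, p.2)) (φuv p) p.1)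
    (hPDEg : ∀ p ∈ U, guv p + a p • gv p + b p • g p = 0)
    (hbne : ∀ p ∈ U, b p ≠ 0)
    (hφne : ∀ p ∈ U, φ p ≠ 0)
    (hPDEφ : ∀ p ∈ U, φuv p - (a p + bu p / b p) * φv p + b p * φ p = 0) :
    ∀ p ∈ U,
      deriv (fun v => φ (p.1, v) • g (p.1, v)) p.2 =
        deriv (fun u => (-(b (u, p.2))⁻¹ * φv (u, p.2)) • gv (u, p.2)) p.1 := by
  intro p hp
  -- smoothness at points of U
  have hCA : ∀ q ∈ U, ContDiffAt ℝ (⊤ : ℕ∞) g q := fun q hq => hg.contDiffAt (hU.mem_nhds hq)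
  set f' : ℝ × ℝ → (ℝ × ℝ) →L[ℝ] EuclideanSpace ℝ (Fin (n + 1)) := fderiv ℝ g with hf'
  have hfd : ∀ q ∈ U, HasFDerivAt g (f' q) q := fun q hq =>
    ((hCA q hq).differentiableAt (by simp)).hasFDerivAt
  -- gu q = f' q (1,0), gv q = f' q (0,1)
  have hgu_eq : ∀ q ∈ U, gu q = f' q (1, 0) := by
    intro q hq
    have hline : HasDerivAt (fun u : ℝ => (u, q.2)) ((1 : ℝ), (0 : ℝ)) q.1 :=
      HasDerivAt.prodMk (hasDerivAt_id q.1) (hasDerivAt_const _ _)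
    have := (hfd q hq).comp_hasDerivAt q.1 hline
    exact (hgu q hq).unique this
  have hgv_eq : ∀ q ∈ U, gv q = f' q (0, 1) := by
    intro q hq
    have hline : HasDerivAt (fun v : ℝ => (q.1, v)) ((0 : ℝ), (1 : ℝ)) q.2 :=
      HasDerivAt.prodMk (hasDerivAt_const _ _) (hasDerivAt_id q.2)
    have := (hfd q hq).comp_hasDerivAt q.2 hline
    exact (hgv q hq).unique this
  -- f' is differentiable at p
  have hf'diff : DifferentiableAt ℝ f' p := by
    have : ContDiffAt ℝ 1 f' p := (hCA p hp).fderiv_right (by exact WithTop.coe_le_coe.mpr le_top)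
    exact this.differentiableAt one_ne_zero
  set f'' := fderiv ℝ f' p with hf''
  -- derivative of v ↦ f' (p.1, v) at p.2 is f'' (0,1); applied to (1,0)
  have hsymm : f'' (1,0) (0,1) = f'' (0,1) (1,0) :=
    ((hCA p hp).isSymmSndFDerivAt (by rw [minSmoothness_of_isRCLikeNormedField]; exact WithTop.coe_le_coe.mpr le_top)) _ _
  -- guv p = f'' (0,1) (1,0)
  have hguv_eq : guv p = f'' (0, 1) (1, 0) := by
    have hline : HasDerivAt (fun v : ℝ => (p.1, v)) ((0 : ℝ), (1 : ℝ)) p.2 :=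
      HasDerivAt.prodMk (hasDerivAt_const _ _) (hasDerivAt_id p.2)
    have h1 : HasDerivAt (fun v => f' (p.1, v)) (f'' (0,1)) p.2 := by
      simpa [Function.comp_def] using hf'diff.hasFDerivAt.comp_hasDerivAt p.2 hline
    have h2 : HasDerivAt (fun v => f' (p.1, v) (1, 0)) (f'' (0,1) (1,0)) p.2 := by
      simpa using h1.clm_apply (hasDerivAt_const _ _)
    have h3 : HasDerivAt (fun v => gu (p.1, v)) (f'' (0,1) (1,0)) p.2 := by
      apply h2.congr_of_eventuallyEq
      have : ∀ᶠ v in nhds p.2, (p.1, v) ∈ U := by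
        have : ContinuousAt (fun v : ℝ => (p.1, v)) p.2 := (continuous_const.prodMk continuous_id).continuousAt
        exact this (hU.mem_nhds (by simpa using hp))
      filter_upwards [this] with v hv
      exact hgu_eq (p.1, v) hv
    exact (hguv p hp).unique h3
  -- gvu : ∂_u gv at p
  have hgvu : HasDerivAt (fun u => gv (u, p.2)) (guv p) p.1 := by
    have hline : HasDerivAt (fun u : ℝ => (u, p.2)) ((1 : ℝ), (0 : ℝ)) p.1 :=
      HasDerivAt.prodMk (hasDerivAt_id p.1) (hasDerivAt_const _ _)
    have h1 : HasDerivAt (fun u => f' (u, p.2)) (f'' (1,0)) p.1 := by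
      simpa [Function.comp_def] using hf'diff.hasFDerivAt.comp_hasDerivAt p.1 hline
    have h2 : HasDerivAt (fun u => f' (u, p.2) (0, 1)) (f'' (1,0) (0,1)) p.1 := by
      simpa using h1.clm_apply (hasDerivAt_const _ _)
    have h3 : HasDerivAt (fun u => gv (u, p.2)) (f'' (1,0) (0,1)) p.1 := by
      apply h2.congr_of_eventuallyEq
      have : ∀ᶠ u in nhds p.1, (u, p.2) ∈ U := by
        have : ContinuousAt (fun u : ℝ => (u, p.2)) p.1 := (continuous_id.prodMk continuous_const).continuousAt
        exact this (hU.mem_nhds (by simpa using hp))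
      filter_upwards [this] with u hu
      exact hgv_eq (u, p.2) hu
    rw [hguv_eq, ← hsymm]; exact h3
  -- LHS derivative
  have hL := (hφv p hp).smul (hgv p hp)
  -- RHS derivative
  have hbinv : HasDerivAt (fun u => -(b (u, p.2))⁻¹ * φv (u, p.2))
      ((bu p / b p ^ 2) * φv p + -(b p)⁻¹ * φuv p) p.1 := by
    have h1 : HasDerivAt (fun u => -(b (u, p.2))⁻¹) (bu p / b p ^ 2) p.1 := by
      have := ((hbu p hp).inv (hbne p hp)).neg
      simpa [neg_div, Pi.inv_def, Pi.neg_def] using this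
    simpa [Pi.mul_def] using h1.mul (hφuv p hp)
  have hR := hbinv.smul hgvu
  rw [HasDerivAt.deriv (f := fun v => φ (p.1, v) • g (p.1, v)) hL,
    HasDerivAt.deriv (f := fun u => (-(b (u, p.2))⁻¹ * φv (u, p.2)) • gv (u, p.2)) hR]
  -- now algebra
  have hguv' : guv p = (-(a p)) • gv p + (-(b p)) • g p := by
    have h := hPDEg p hp
    rw [neg_smul, neg_smul]
    linear_combination (norm := module) h
  rw [hguv']
  have hb := hbne p hp
  have hφeq : φuv p = (a p + bu p / b p) * φv p - b p * φ p := by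
    have := hPDEφ p hp; linarith
  match_scalars
  · rw [hφeq]; field_simp; ring
  · field_simp
end

section
/- Let g : U → ℝ^{n+1} be smooth with g_{uv} + a g_v + b g = 0, ⟨g, g⟩ ≡ 1, and b = ⟨g_u, g_v⟩ nowhere zero on U. Let φ be a nowhere vanishing solution of φ_{uv} − (a + b_u/b)φ_v + bφ = 0 with φ_v nowhere zero, and let h satisfy h_u = φ g and h_v = −b⁻¹ φ_v g_v. Then ⟨h_u, h_v⟩ = 0 and h_{uv} = (φ_v/φ) h_u − (bφ/φ_v) h_v; in particular h_{uv} lies in the span of {h_u, h_v}. -/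
open scoped RealInnerProductSpace

/-- For the surface `h` with `h_u = φ g`, `h_v = −b⁻¹ φ_v g_v`, one has `⟨h_u, h_v⟩ = 0` and
`h_{uv} = (φ_v/φ) h_u − (bφ/φ_v) h_v`; in particular `h_{uv} ∈ span {h_u, h_v}`. -/
theorem stmt_5 {n : ℕ} (U : Set (ℝ × ℝ)) (hU : IsOpen U)
    (g gu gv guv : ℝ × ℝ → EuclideanSpace ℝ (Fin (n + 1)))
    (h huv : ℝ × ℝ → EuclideanSpace ℝ (Fin (n + 1)))
    (a b bu φ φv φuv : ℝ × ℝ → ℝ)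
    (hg : ContDiffOn ℝ (⊤ : ℕ∞) g U) (hφs : ContDiffOn ℝ (⊤ : ℕ∞) φ U)
    (hgu : ∀ p ∈ U, HasDerivAt (fun u => g (u, p.2)) (gu p) p.1)
    (hgv : ∀ p ∈ U, HasDerivAt (fun v => g (p.1, v)) (gv p) p.2)
    (hguv : ∀ p ∈ U, HasDerivAt (fun v => gu (p.1, v)) (guv p) p.2)
    (hbu : ∀ p ∈ U, HasDerivAt (fun u => b (u, p.2)) (bu p) p.1)
    (hφv : ∀ p ∈ U, HasDerivAt (fun v => φ (p.1, v)) (φv p) p.2)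
    (hφuv : ∀ p ∈ U, HasDerivAt (fun u => φv (u, p.2)) (φuv p) p.1)
    (hsph : ∀ p ∈ U, ⟪g p, g p⟫ = 1)
    (hbdef : ∀ p ∈ U, b p = ⟪gu p, gv p⟫)
    (hbne : ∀ p ∈ U, b p ≠ 0)
    (hφne : ∀ p ∈ U, φ p ≠ 0)
    (hφvne : ∀ p ∈ U, φv p ≠ 0)
    (hPDEg : ∀ p ∈ U, guv p + a p • gv p + b p • g p = 0)
    (hPDEφ : ∀ p ∈ U, φuv p - (a p + bu p / b p) * φv p + b p * φ p = 0)
    (hhu : ∀ p ∈ U, HasDerivAt (fun u => h (u, p.2)) (φ p • g p) p.1)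
    (hhv : ∀ p ∈ U, HasDerivAt (fun v => h (p.1, v)) ((-(b p)⁻¹ * φv p) • gv p) p.2)
    (hhuv : ∀ p ∈ U, HasDerivAt (fun v => φ (p.1, v) • g (p.1, v)) (huv p) p.2) :
    ∀ p ∈ U,
      ⟪φ p • g p, (-(b p)⁻¹ * φv p) • gv p⟫ = 0 ∧
      huv p = (φv p / φ p) • (φ p • g p) -
          (b p * φ p / φv p) • ((-(b p)⁻¹ * φv p) • gv p) ∧
      huv p ∈ Submodule.span ℝ {φ p • g p, (-(b p)⁻¹ * φv p) • gv p} := by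
  intro p hp
  -- ⟪g, gv⟫ = 0
  have hd : HasDerivAt (fun v => ⟪g (p.1, v), g (p.1, v)⟫)
      (⟪g (p.1, p.2), gv p⟫ + ⟪gv p, g (p.1, p.2)⟫) p.2 :=
    (hgv p hp).inner ℝ (hgv p hp)
  have hloc : (fun v => ⟪g (p.1, v), g (p.1, v)⟫) =ᶠ[nhds p.2] fun _ => (1 : ℝ) := by
    have : ∀ᶠ v in nhds p.2, (p.1, v) ∈ U := by
      have := hU.mem_nhds hp
      have hc : Continuous fun v : ℝ => (p.1, v) := by continuity
      exact hc.continuousAt.preimage_mem_nhds (by simpa using this)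
    filter_upwards [this] with v hv using hsph _ hv
  have hd0 : HasDerivAt (fun v => ⟪g (p.1, v), g (p.1, v)⟫) 0 p.2 := by
    have : HasDerivAt (fun _ : ℝ => (1 : ℝ)) 0 p.2 := hasDerivAt_const _ _
    exact this.congr_of_eventuallyEq hloc
  have hggv : ⟪g p, gv p⟫ = 0 := by
    have := hd.unique hd0
    have hsymm : ⟪g (p.1, p.2), gv p⟫ = ⟪gv p, g (p.1, p.2)⟫ := real_inner_comm _ _
    have : (2 : ℝ) * ⟪g p, gv p⟫ = 0 := by
      rw [hsymm] at this
      simpa [two_mul, real_inner_comm (gv p)] using this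
    linarith
  have hinner : ⟪φ p • g p, (-(b p)⁻¹ * φv p) • gv p⟫ = 0 := by
    rw [real_inner_smul_left, real_inner_smul_right, hggv]; ring
  -- huv = φv • g + φ • gv
  have hd2 : HasDerivAt (fun v => φ (p.1, v) • g (p.1, v))
      (φ (p.1, p.2) • gv p + φv p • g (p.1, p.2)) p.2 := (hφv p hp).smul (hgv p hp)
  have huveq : huv p = φv p • g p + φ p • gv p := by
    rw [(hhuv p hp).unique hd2]; exact add_comm _ _
  have hrhs : (φv p / φ p) • (φ p • g p) -
      (b p * φ p / φv p) • ((-(b p)⁻¹ * φv p) • gv p) = φv p • g p + φ p • gv p := by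
    have e1 : φv p / φ p * φ p = φv p := div_mul_cancel₀ _ (hφne p hp)
    have e2 : b p * φ p / φv p * (-(b p)⁻¹ * φv p) = -φ p := by
      field_simp [hbne p hp, hφvne p hp]
    rw [smul_smul, smul_smul, e1, e2, sub_eq_add_neg, ← neg_smul, neg_neg]
  refine ⟨hinner, by rw [huveq, hrhs], ?_⟩
  rw [huveq, ← hrhs]
  exact sub_mem
    (Submodule.smul_mem _ _ (Submodule.subset_span (Set.mem_insert _ _)))
    (Submodule.smul_mem _ _ (Submodule.subset_span (Set.mem_insert_of_mem _ rfl)))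
end

section
/- Under the hypotheses of the previous construction (h_u = φ g, h_v = −b⁻¹φ_v g_v, with g_{uv} + a g_v + b g = 0, ⟨g,g⟩ = 1, b ≠ 0, φ ≠ 0, φ_v ≠ 0 everywhere), the vector h_{uu} = φ_u g + φ g_u is never contained in the span of {g, g_v}; consequently the second fundamental form value α_h(∂u, ∂u) is nonzero at every point. -/
open scoped RealInnerProductSpace

/-- Regularity (iii''): under the hypotheses of the construction (`h_u = φ g`,
`h_v = −b⁻¹ φ_v g_v`, with `g_{uv} + a g_v + b g = 0`, `⟨g,g⟩ = 1`, `b ≠ 0`, `φ ≠ 0`,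
`φ_v ≠ 0`), the vector `h_{uu} = φ_u g + φ g_u` never lies in `span {g, g_v}`; consequently
the second fundamental form value `α_h(∂u, ∂u)` (the component of `h_{uu}` orthogonal to
`span {g, g_v}`) is nonzero at every point. -/
theorem stmt_6 {n : ℕ} (U : Set (ℝ × ℝ)) (hU : IsOpen U)
    (g gu gv guv : ℝ × ℝ → EuclideanSpace ℝ (Fin (n + 1)))
    (h : ℝ × ℝ → EuclideanSpace ℝ (Fin (n + 1)))
    (a b bu φ φu φv φuv : ℝ × ℝ → ℝ)
    (hg : ContDiffOn ℝ (⊤ : ℕ∞) g U) (hφs : ContDiffOn ℝ (⊤ : ℕ∞) φ U)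
    (hgu : ∀ p ∈ U, HasDerivAt (fun u => g (u, p.2)) (gu p) p.1)
    (hgv : ∀ p ∈ U, HasDerivAt (fun v => g (p.1, v)) (gv p) p.2)
    (hguv : ∀ p ∈ U, HasDerivAt (fun v => gu (p.1, v)) (guv p) p.2)
    (hbu : ∀ p ∈ U, HasDerivAt (fun u => b (u, p.2)) (bu p) p.1)
    (hφu : ∀ p ∈ U, HasDerivAt (fun u => φ (u, p.2)) (φu p) p.1)
    (hφv : ∀ p ∈ U, HasDerivAt (fun v => φ (p.1, v)) (φv p) p.2)
    (hφuv : ∀ p ∈ U, HasDerivAt (fun u => φv (u, p.2)) (φuv p) p.1)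
    (hsph : ∀ p ∈ U, ⟪g p, g p⟫ = 1)
    (himm : ∀ p ∈ U, LinearIndependent ℝ ![gu p, gv p])
    (hbdef : ∀ p ∈ U, b p = ⟪gu p, gv p⟫)
    (hbne : ∀ p ∈ U, b p ≠ 0)
    (hφne : ∀ p ∈ U, φ p ≠ 0)
    (hφvne : ∀ p ∈ U, φv p ≠ 0)
    (hPDEg : ∀ p ∈ U, guv p + a p • gv p + b p • g p = 0)
    (hPDEφ : ∀ p ∈ U, φuv p - (a p + bu p / b p) * φv p + b p * φ p = 0)
    (hhu : ∀ p ∈ U, HasDerivAt (fun u => h (u, p.2)) (φ p • g p) p.1)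
    (hhv : ∀ p ∈ U, HasDerivAt (fun v => h (p.1, v)) ((-(b p)⁻¹ * φv p) • gv p) p.2) :
    ∀ p ∈ U,
      φu p • g p + φ p • gu p ∉ Submodule.span ℝ {g p, gv p} ∧
      ∃ w : EuclideanSpace ℝ (Fin (n + 1)),
        ⟪w, g p⟫ = 0 ∧ ⟪w, gv p⟫ = 0 ∧ ⟪w, φu p • g p + φ p • gu p⟫ ≠ 0 := by
  intro p hp
  -- orthogonality of g to gu : differentiate ⟪g,g⟫ = 1 in u
  have key : ∀ (q : ℝ → ℝ × ℝ) (t : ℝ) (d : EuclideanSpace ℝ (Fin (n+1))),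
      Continuous q → q t = p → HasDerivAt (fun s => g (q s)) d t → ⟪g p, d⟫ = 0 := by
    intro q t d hqc hqt hder
    have hopen : IsOpen (q ⁻¹' U) := hU.preimage hqc
    have hmem : t ∈ q ⁻¹' U := by simp [Set.mem_preimage, hqt, hp]
    have h1 : HasDerivAt (fun s => ⟪g (q s), g (q s)⟫) (⟪g (q t), d⟫ + ⟪d, g (q t)⟫) t :=
      hder.inner ℝ hder
    have h2 : HasDerivAt (fun s => ⟪g (q s), g (q s)⟫) 0 t := by
      refine (hasDerivAt_const t (1:ℝ)).congr_of_eventuallyEq ?_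
      filter_upwards [hopen.mem_nhds hmem] with s hs using hsph (q s) hs
    have := h1.unique h2
    rw [hqt] at this
    have hc := real_inner_comm d (g p)
    linarith
  have hggu : ⟪g p, gu p⟫ = 0 :=
    key (fun u => (u, p.2)) p.1 (gu p) (continuous_id.prodMk continuous_const) rfl (hgu p hp)
  have hggv : ⟪g p, gv p⟫ = 0 :=
    key (fun v => (p.1, v)) p.2 (gv p) (continuous_const.prodMk continuous_id) rfl (hgv p hp)
  have hgg : ⟪g p, g p⟫ = 1 := hsph p hp
  -- gu ∉ span {g, gv}
  have hgu_not : gu p ∉ Submodule.span ℝ {g p, gv p} := by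
    intro hmem
    rw [Submodule.mem_span_pair] at hmem
    obtain ⟨c, d, hcd⟩ := hmem
    have hc : c = 0 := by
      have := congrArg (fun x => ⟪g p, x⟫) hcd
      simp only [inner_add_right, inner_smul_right, hgg, hggv, hggu] at this
      linarith
    have hind := (linearIndependent_fin2.mp (himm p hp)).2 d
    simp only [Matrix.cons_val_one, Matrix.head_cons, Matrix.cons_val_zero] at hind
    apply hind
    rw [← hcd, hc, zero_smul, zero_add]
  set K : Submodule ℝ (EuclideanSpace ℝ (Fin (n+1))) := Submodule.span ℝ {g p, gv p} with hK
  have hfd : FiniteDimensional ℝ K := by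
    apply FiniteDimensional.span_of_finite
    exact (Set.finite_singleton _).insert _
  set w : EuclideanSpace ℝ (Fin (n+1)) := gu p - (K.orthogonalProjectionOnto (gu p) : EuclideanSpace ℝ (Fin (n+1))) with hw
  have hworth : w ∈ Kᗮ := K.sub_starProjection_mem_orthogonal (gu p)
  have hwmem : ∀ x ∈ K, ⟪w, x⟫ = 0 := fun x hx => by
    rw [real_inner_comm]; exact hworth x hx
  have hgK : g p ∈ K := Submodule.subset_span (Set.mem_insert _ _)
  have hgvK : gv p ∈ K := Submodule.subset_span (Set.mem_insert_of_mem _ rfl)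
  have hwne : w ≠ 0 := by
    intro h0
    apply hgu_not
    have : gu p = (K.orthogonalProjectionOnto (gu p) : EuclideanSpace ℝ (Fin (n+1))) := by
      have := sub_eq_zero.mp h0
      exact this
    rw [this]; exact (K.orthogonalProjectionOnto (gu p)).2
  have hwgu : ⟪w, gu p⟫ = ‖w‖ ^ 2 := by
    have : gu p = w + (K.orthogonalProjectionOnto (gu p) : EuclideanSpace ℝ (Fin (n+1))) := by
      rw [hw]; abel
    rw [this, inner_add_right, hwmem _ (K.orthogonalProjectionOnto (gu p)).2,
      real_inner_self_eq_norm_sq, add_zero]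
  have hwg : ⟪w, g p⟫ = 0 := hwmem _ hgK
  have hwgv : ⟪w, gv p⟫ = 0 := hwmem _ hgvK
  have hmain : ⟪w, φu p • g p + φ p • gu p⟫ ≠ 0 := by
    rw [inner_add_right, inner_smul_right, inner_smul_right, hwg, hwgu, mul_zero, zero_add]
    exact mul_ne_zero (hφne p hp) (pow_ne_zero 2 (norm_ne_zero_iff.mpr hwne))
  refine ⟨?_, w, hwg, hwgv, hmain⟩
  intro hmem
  apply hgu_not
  have h1 : φ p • gu p ∈ K := by
    have := K.sub_mem hmem (K.smul_mem (φu p) hgK)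
    simpa using this
  have := K.smul_mem (φ p)⁻¹ h1
  rwa [smul_smul, inv_mul_cancel₀ (hφne p hp), one_smul] at this
end

section
/- Let g : L² → ℝ^{n+1} be a smooth immersion with image in the unit sphere S^n, and suppose there are smooth vector fields X, Y on L² with ‖Y‖ = 1 (in the induced metric), ⟨X, Y⟩ ≠ 0 everywhere, ∇^g_X Y = 0, and α_g(X, Y) = 0 (i.e., the ambient directional derivative of g_*Y along X vanishes in ℝ^{n+1} up to the radial direction; equivalently Y is parallel along X in S^n). If the Gauss curvature of the induced metric is nowhere 1, then the map k := g_*Y : L² → S^n is an immersion. -/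
set_option maxHeartbeats 2000000


open scoped RealInnerProductSpace

/-- Component of `v` normal to the surface `g` in the sphere at `p`: the projection of `v`
orthogonal to the position vector `g p` and to the tangent plane of `g` at `p`. -/
noncomputable def sphNormal {n : ℕ} (g : ℝ × ℝ → EuclideanSpace ℝ (Fin (n + 1)))
    (p : ℝ × ℝ) (v : EuclideanSpace ℝ (Fin (n + 1))) : EuclideanSpace ℝ (Fin (n + 1)) :=
  v - (Submodule.orthogonalProjectionOnto
      (Submodule.span ℝ {g p, fderiv ℝ g p (1, 0), fderiv ℝ g p (0, 1)}) v :
    EuclideanSpace ℝ (Fin (n + 1)))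

/-- Second fundamental form of `g : L² → Sⁿ` (as a submanifold of the sphere) evaluated on
constant coordinate directions `v, w` at `p`. -/
noncomputable def sff {n : ℕ} (g : ℝ × ℝ → EuclideanSpace ℝ (Fin (n + 1)))
    (v w : ℝ × ℝ) (p : ℝ × ℝ) : EuclideanSpace ℝ (Fin (n + 1)) :=
  sphNormal g p (fderiv ℝ (fun q => fderiv ℝ g q w) p v)

/-- Gauss curvature of the metric induced by `g : L² → Sⁿ`, computed via the Gauss equation
of `g` as a submanifold of the unit sphere. -/
noncomputable def gaussK {n : ℕ} (g : ℝ × ℝ → EuclideanSpace ℝ (Fin (n + 1)))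
    (p : ℝ × ℝ) : ℝ :=
  1 + (⟪sff g (1, 0) (1, 0) p, sff g (0, 1) (0, 1) p⟫ - ‖sff g (1, 0) (0, 1) p‖ ^ 2) /
    (‖fderiv ℝ g p (1, 0)‖ ^ 2 * ‖fderiv ℝ g p (0, 1)‖ ^ 2 -
      ⟪fderiv ℝ g p (1, 0), fderiv ℝ g p (0, 1)⟫ ^ 2)

lemma decomp2 {u v : ℝ × ℝ} (h : LinearIndependent ℝ ![u, v]) (w : ℝ × ℝ) :
    ∃ a b : ℝ, w = a • u + b • v := by
  have h1 : Set.range ![u, v] = {u, v} := by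
    simp [Matrix.range_cons, Matrix.range_empty, Set.pair_comm]
  have h2 := finrank_span_eq_card h
  rw [h1] at h2
  have hsp : Submodule.span ℝ ({u, v} : Set (ℝ × ℝ)) = ⊤ :=
    Submodule.eq_top_of_finrank_eq (by simp [h2])
  have hw : w ∈ Submodule.span ℝ ({u, v} : Set (ℝ × ℝ)) := by
    rw [hsp]; trivial
  obtain ⟨a, b, hab⟩ := Submodule.mem_span_pair.mp hw
  exact ⟨a, b, hab.symm⟩

/-- Proposition 7 (first part): if `g : L² → Sⁿ` is an immersion carrying linearly independent
vector fields `X, Y` with `‖Y‖ = 1`, `⟨X, Y⟩ ≠ 0`, and `g_*Y` parallel along `X` in `Sⁿ`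
(ambient derivative radial), and the Gauss curvature is nowhere `1`, then `k := g_*Y` is an
immersion into `Sⁿ`. -/
theorem stmt_7 {n : ℕ} (hn : 3 ≤ n) (U : Set (ℝ × ℝ)) (hU : IsOpen U)
    (g : ℝ × ℝ → EuclideanSpace ℝ (Fin (n + 1)))
    (hg : ContDiffOn ℝ (⊤ : ℕ∞) g U)
    (hsph : ∀ p ∈ U, ‖g p‖ = 1)
    (himm : ∀ p ∈ U, Function.Injective ⇑(fderiv ℝ g p))
    (X Y : ℝ × ℝ → ℝ × ℝ)
    (hXs : ContDiffOn ℝ (⊤ : ℕ∞) X U) (hYs : ContDiffOn ℝ (⊤ : ℕ∞) Y U)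
    (hind : ∀ p ∈ U, LinearIndependent ℝ ![X p, Y p])
    (hYunit : ∀ p ∈ U, ‖fderiv ℝ g p (Y p)‖ = 1)
    (hXYne : ∀ p ∈ U, ⟪fderiv ℝ g p (X p), fderiv ℝ g p (Y p)⟫ ≠ 0)
    (hpar : ∀ p ∈ U,
      fderiv ℝ (fun q => fderiv ℝ g q (Y q)) p (X p) ∈ Submodule.span ℝ {g p})
    (hK : ∀ p ∈ U, gaussK g p ≠ 1) :
    ∀ p ∈ U, ‖fderiv ℝ g p (Y p)‖ = 1 ∧
      Function.Injective ⇑(fderiv ℝ (fun q => fderiv ℝ g q (Y q)) p) := by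
  intro p hp
  refine ⟨hYunit p hp, ?_⟩
  have hUp : U ∈ nhds p := hU.mem_nhds hp
  have hgAt : ContDiffAt ℝ (⊤ : ℕ∞) g p := hg.contDiffAt hUp
  -- differentiability of g on U
  have hgd : ∀ q ∈ U, HasFDerivAt g (fderiv ℝ g q) q := fun q hq =>
    ((hg.contDiffAt (hU.mem_nhds hq)).differentiableAt (by simp)).hasFDerivAt
  -- second derivative
  set B := fderiv ℝ (fderiv ℝ g) p with hBdef
  have hg' : ContDiffAt ℝ 1 (fderiv ℝ g) p := hgAt.fderiv_right (WithTop.coe_le_coe.mpr le_top)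
  have hB : HasFDerivAt (fderiv ℝ g) B p := (hg'.differentiableAt one_ne_zero).hasFDerivAt
  have hBsymm : ∀ v w, B v w = B w v := fun v w =>
    (hgAt.isSymmSndFDerivAt (by rw [minSmoothness_of_isRCLikeNormedField]; exact WithTop.coe_le_coe.mpr (le_top : (2 : ℕ∞) ≤ ⊤))).eq v w
  -- derivative of Y
  have hY' : HasFDerivAt Y (fderiv ℝ Y p) p :=
    ((hYs.contDiffAt hUp).differentiableAt (by simp)).hasFDerivAt
  -- derivative of k
  set D : (ℝ × ℝ) →L[ℝ] EuclideanSpace ℝ (Fin (n + 1)) :=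
    (fderiv ℝ g p).comp (fderiv ℝ Y p) + B.flip (Y p) with hDdef
  have hk : HasFDerivAt (fun q => fderiv ℝ g q (Y q)) D p := hB.clm_apply hY'
  have hkf : fderiv ℝ (fun q => fderiv ℝ g q (Y q)) p = D := hk.fderiv
  rw [hkf]
  have hDv : ∀ v, D v = fderiv ℝ g p (fderiv ℝ Y p v) + B v (Y p) := by
    intro v
    simp [hDdef, ContinuousLinearMap.add_apply, ContinuousLinearMap.flip_apply]
  -- sff in terms of B
  have hsff : ∀ v w : ℝ × ℝ, sff g v w p = sphNormal g p (B v w) := by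
    intro v w
    have h1 : HasFDerivAt (fun q => fderiv ℝ g q w)
        ((fderiv ℝ g p).comp (0 : (ℝ × ℝ) →L[ℝ] (ℝ × ℝ)) + B.flip w) p :=
      hB.clm_apply (hasFDerivAt_const w p)
    have h2 := h1.fderiv
    rw [sff, h2]
    simp [ContinuousLinearMap.add_apply, ContinuousLinearMap.flip_apply]
  -- the subspace S and linearity of sphNormal
  set S := Submodule.span ℝ {g p, fderiv ℝ g p (1, 0), fderiv ℝ g p (0, 1)} with hSdef
  have hNspan : ∀ v ∈ S, sphNormal g p v = 0 := by
    intro v hv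
    rw [sphNormal]; exact sub_eq_zero.mpr (Submodule.starProjection_eq_self_iff.mpr hv).symm
  have hNadd : ∀ v w, sphNormal g p (v + w) = sphNormal g p v + sphNormal g p w := by
    intro v w
    simp only [sphNormal, map_add, Submodule.coe_add]
    abel
  have hNsmul : ∀ (c : ℝ) v, sphNormal g p (c • v) = c • sphNormal g p v := by
    intro c v
    simp only [sphNormal, map_smul, SetLike.val_smul, smul_sub]
  have hgS : g p ∈ S := Submodule.subset_span (by simp)
  have hGS : ∀ v, fderiv ℝ g p v ∈ S := by
    intro v
    have hv : v = v.1 • ((1 : ℝ), (0 : ℝ)) + v.2 • ((0 : ℝ), (1 : ℝ)) := by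
      ext <;> simp
    rw [hv, map_add, map_smul, map_smul]
    exact S.add_mem (S.smul_mem _ (Submodule.subset_span (by simp)))
      (S.smul_mem _ (Submodule.subset_span (by simp)))
  -- tangent vectors orthogonal to position
  have horth : ∀ q ∈ U, ∀ v, ⟪fderiv ℝ g q v, g q⟫ = 0 := by
    intro q hq v
    have hgq := hgd q hq
    have hi : HasFDerivAt (fun r => ⟪g r, g r⟫)
        ((fderivInnerCLM ℝ (g q, g q)).comp ((fderiv ℝ g q).prod (fderiv ℝ g q))) q :=
      hgq.inner ℝ hgq
    have hone : (fun r => ⟪g r, g r⟫) =ᶠ[nhds q] fun _ => (1 : ℝ) := by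
      filter_upwards [hU.mem_nhds hq] with r hr
      rw [real_inner_self_eq_norm_sq, hsph r hr]; norm_num
    have h0 : fderiv ℝ (fun r => ⟪g r, g r⟫) q = 0 := by
      rw [hone.fderiv_eq, fderiv_fun_const]; rfl
    have := hi.fderiv
    rw [h0] at this
    have h3 := ContinuousLinearMap.ext_iff.mp this.symm v
    simp only [ContinuousLinearMap.zero_apply, ContinuousLinearMap.comp_apply,
      ContinuousLinearMap.prod_apply, fderivInnerCLM_apply] at h3
    have h4 := real_inner_comm (g q) (fderiv ℝ g q v)
    linarith
  -- inner products with g p of D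
  have hgg : ⟪g p, g p⟫ = 1 := by
    rw [real_inner_self_eq_norm_sq, hsph p hp]; norm_num
  have hDg : ∀ v, ⟪D v, g p⟫ = -⟪fderiv ℝ g p (Y p), fderiv ℝ g p v⟫ := by
    intro v
    have hfd : HasFDerivAt (fun q => ⟪fderiv ℝ g q (Y q), g q⟫)
        ((fderivInnerCLM ℝ (fderiv ℝ g p (Y p), g p)).comp (D.prod (fderiv ℝ g p))) p :=
      hk.inner ℝ (hgd p hp)
    have hzero : (fun q => ⟪fderiv ℝ g q (Y q), g q⟫) =ᶠ[nhds p] fun _ => (0 : ℝ) := by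
      filter_upwards [hUp] with r hr
      exact horth r hr (Y r)
    have h0 : fderiv ℝ (fun q => ⟪fderiv ℝ g q (Y q), g q⟫) p = 0 := by
      rw [hzero.fderiv_eq, fderiv_fun_const]; rfl
    have := hfd.fderiv
    rw [h0] at this
    have h3 := ContinuousLinearMap.ext_iff.mp this.symm v
    simp only [ContinuousLinearMap.zero_apply, ContinuousLinearMap.comp_apply,
      ContinuousLinearMap.prod_apply, fderivInnerCLM_apply] at h3
    have h4 := real_inner_comm (D v) (g p)
    have h5 := real_inner_comm (fderiv ℝ g p (Y p)) (fderiv ℝ g p v)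
    linarith
  -- radial derivative implies vanishing normal second fundamental form
  have hrad : ∀ v, D v ∈ Submodule.span ℝ {g p} → sphNormal g p (B v (Y p)) = 0 := by
    intro v hv
    obtain ⟨c, hc⟩ := Submodule.mem_span_singleton.mp hv
    have h1 : B v (Y p) = D v - fderiv ℝ g p (fderiv ℝ Y p v) := by
      rw [hDv v]; abel
    have h2 : D v ∈ S := by
      rw [← hc]; exact S.smul_mem _ hgS
    have h3 : B v (Y p) = D v + (-1 : ℝ) • fderiv ℝ g p (fderiv ℝ Y p v) := by
      rw [h1]; module
    rw [h3, hNadd, hNsmul, hNspan _ h2, hNspan _ (hGS _)]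
    simp
  -- lambda
  have hDX : D (X p) ∈ Submodule.span ℝ {g p} := by
    rw [← hkf]; exact hpar p hp
  obtain ⟨lam, hlam⟩ := Submodule.mem_span_singleton.mp hDX
  have hlamval : lam = -⟪fderiv ℝ g p (X p), fderiv ℝ g p (Y p)⟫ := by
    have h := hDg (X p)
    rw [← hlam, real_inner_smul_left, hgg, mul_one] at h
    rw [h, real_inner_comm]
  have hlamne : lam ≠ 0 := by
    rw [hlamval]
    simpa using hXYne p hp
  have hDYg : ⟪D (Y p), g p⟫ = -1 := by
    rw [hDg (Y p), real_inner_self_eq_norm_sq, hYunit p hp]; norm_num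
  have hDXg : ⟪D (X p), g p⟫ = lam := by
    rw [← hlam, real_inner_smul_left, hgg, mul_one]
  -- injectivity
  have hker : ∀ z, D z = 0 → z = 0 := by
    intro z hz
    obtain ⟨a, b, hab⟩ := decomp2 (hind p hp) z
    have h0 : a • D (X p) + b • D (Y p) = 0 := by
      rw [← map_smul, ← map_smul, ← map_add, ← hab, hz]
    have hinner : a * lam + b * (-1) = 0 := by
      have := congrArg (fun u => ⟪u, g p⟫) h0
      simpa only [inner_add_left, real_inner_smul_left, hDXg, hDYg, inner_zero_left]
        using this
    by_cases ha : a = 0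
    · have hb : b = 0 := by rw [ha] at hinner; linarith
      rw [hab, ha, hb]; simp
    · exfalso
      -- b ≠ 0 and D (Y p) is radial
      have hb : b = a * lam := by linarith
      have hbne : b ≠ 0 := by rw [hb]; exact mul_ne_zero ha hlamne
      have hDY : D (Y p) ∈ Submodule.span ℝ {g p} := by
        have h1 : b • D (Y p) = (-a) • D (X p) := by
          have h : b • D (Y p) = -(a • D (X p)) := eq_neg_of_add_eq_zero_left (by
            have h0' : b • D (Y p) + a • D (X p) = 0 := by
              calc b • D (Y p) + a • D (X p) = a • D (X p) + b • D (Y p) := by abel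
                _ = 0 := h0
            exact h0')
          exact h.trans (neg_smul a _).symm
        have h2 : D (Y p) = b⁻¹ • ((-a) • D (X p)) :=
          calc D (Y p) = b⁻¹ • (b • D (Y p)) := (inv_smul_smul₀ hbne _).symm
            _ = b⁻¹ • ((-a) • D (X p)) := by rw [h1]
        rw [h2]
        exact Submodule.smul_mem _ _ (Submodule.smul_mem _ _ hDX)
      -- now alpha(v, Y p) = 0 for all v
      have halpha : ∀ v, sphNormal g p (B v (Y p)) = 0 := by
        intro v
        obtain ⟨c, d, hcd⟩ := decomp2 (hind p hp) v
        have : B v (Y p) = c • B (X p) (Y p) + d • B (Y p) (Y p) := by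
          rw [hcd]
          simp [ContinuousLinearMap.add_apply, ContinuousLinearMap.map_smul,
            ContinuousLinearMap.smul_apply]
        rw [this, hNadd, hNsmul, hNsmul, hrad _ hDX, hrad _ hDY]
        simp
      -- and by symmetry alpha(Y p, v) = 0
      have halpha' : ∀ v, sphNormal g p (B (Y p) v) = 0 := by
        intro v; rw [hBsymm]; exact halpha v
      -- compute the numerator of gaussK
      obtain ⟨a1, b1, he1⟩ := decomp2 (hind p hp) ((1 : ℝ), (0 : ℝ))
      obtain ⟨a2, b2, he2⟩ := decomp2 (hind p hp) ((0 : ℝ), (1 : ℝ))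
      set A := sphNormal g p (B (X p) (X p)) with hA
      have hsffXX : ∀ (s1 t1 s2 t2 : ℝ),
          sphNormal g p (B (s1 • X p + t1 • Y p) (s2 • X p + t2 • Y p)) = (s1 * s2) • A := by
        intro s1 t1 s2 t2
        have hfst : ∀ u : ℝ × ℝ, B (s1 • X p + t1 • Y p) u
            = s1 • B (X p) u + t1 • B (Y p) u := by
          intro u
          have hB1 : B (s1 • X p + t1 • Y p) = s1 • B (X p) + t1 • B (Y p) := by
            rw [map_add, map_smul, map_smul]
          rw [hB1, ContinuousLinearMap.add_apply, ContinuousLinearMap.smul_apply,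
            ContinuousLinearMap.smul_apply]
        have hsnd : B (s1 • X p + t1 • Y p) (s2 • X p + t2 • Y p)
            = s2 • B (s1 • X p + t1 • Y p) (X p) + t2 • B (s1 • X p + t1 • Y p) (Y p) := by
          rw [map_add, map_smul, map_smul]
        rw [hsnd, hfst (X p), hfst (Y p), hNadd, hNsmul, hNsmul, hNadd, hNsmul, hNsmul,
          hNadd, hNsmul, hNsmul, halpha (X p), halpha' (X p), halpha' (Y p)]
        simp only [smul_zero, add_zero, zero_add, smul_smul]
        rw [← hA, mul_comm s2 s1]
      have h11 : sff g (1, 0) (1, 0) p = (a1 * a1) • A := by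
        rw [hsff, he1, hsffXX]
      have h22 : sff g (0, 1) (0, 1) p = (a2 * a2) • A := by
        rw [hsff, he2, hsffXX]
      have h12 : sff g (1, 0) (0, 1) p = (a1 * a2) • A := by
        rw [hsff, he1, he2, hsffXX]
      have hnum : ⟪sff g (1, 0) (1, 0) p, sff g (0, 1) (0, 1) p⟫
          - ‖sff g (1, 0) (0, 1) p‖ ^ 2 = 0 := by
        rw [h11, h22, h12, real_inner_smul_left, real_inner_smul_right,
          real_inner_self_eq_norm_sq, norm_smul, mul_pow, Real.norm_eq_abs, sq_abs]
        ring
      have : gaussK g p = 1 := by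
        rw [gaussK, hnum]
        simp
      exact hK p hp this
  intro z1 z2 hz
  have h : D (z1 - z2) = 0 := by rw [map_sub, hz, sub_self]
  exact sub_eq_zero.mp (hker _ h)
end

section
/- In the setting of Proposition 7, set X_k := Y and Y_k := X / ⟨X, Y⟩. Then with respect to the metric induced by k = g_*Y: (a) k_* Y_k = −g, so Y_k is a unit vector field; (b) ⟨X_k, Y_k⟩_k = 1 ≠ 0; (c) the ambient derivative in ℝ^{n+1} satisfies ∇̃_{X_k} (k_* Y_k) = −k, hence Y_k is parallel along X_k in S^n. In particular the dual surface k is again of type D, and the dual of k is −g. -/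
open scoped RealInnerProductSpace

/-- Proposition 7 (second part): for a type `D` surface `g` with `K ≠ 1` and dual surface
`k = g_*Y`, setting `X_k := Y` and `Y_k := X / ⟨X, Y⟩`: (a) `k_*Y_k = −g`, so `Y_k` is a
unit field for the metric induced by `k`; (b) `⟨X_k, Y_k⟩_k = 1`; (c) the ambient
derivative of `k_*Y_k` along `X_k` equals `−k`, so `Y_k` is parallel along `X_k` in `Sⁿ`
and the dual of `k` is `−g`. -/
theorem stmt_8 {n : ℕ} (hn : 3 ≤ n) (U : Set (ℝ × ℝ)) (hU : IsOpen U)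
    (g : ℝ × ℝ → EuclideanSpace ℝ (Fin (n + 1)))
    (hg : ContDiffOn ℝ (⊤ : ℕ∞) g U)
    (hsph : ∀ p ∈ U, ‖g p‖ = 1)
    (himm : ∀ p ∈ U, Function.Injective ⇑(fderiv ℝ g p))
    (X Y : ℝ × ℝ → ℝ × ℝ)
    (hXs : ContDiffOn ℝ (⊤ : ℕ∞) X U) (hYs : ContDiffOn ℝ (⊤ : ℕ∞) Y U)
    (hind : ∀ p ∈ U, LinearIndependent ℝ ![X p, Y p])
    (hYunit : ∀ p ∈ U, ‖fderiv ℝ g p (Y p)‖ = 1)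
    (hXYne : ∀ p ∈ U, ⟪fderiv ℝ g p (X p), fderiv ℝ g p (Y p)⟫ ≠ 0)
    (hpar : ∀ p ∈ U,
      fderiv ℝ (fun q => fderiv ℝ g q (Y q)) p (X p) ∈ Submodule.span ℝ {g p})
    (hK : ∀ p ∈ U, gaussK g p ≠ 1)
    (k : ℝ × ℝ → EuclideanSpace ℝ (Fin (n + 1)))
    (hk : ∀ q ∈ U, k q = fderiv ℝ g q (Y q))
    (Xk Yk : ℝ × ℝ → ℝ × ℝ)
    (hXk : ∀ p ∈ U, Xk p = Y p)
    (hYk : ∀ p ∈ U,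
      Yk p = (⟪fderiv ℝ g p (X p), fderiv ℝ g p (Y p)⟫)⁻¹ • X p) :
    ∀ p ∈ U,
      (fderiv ℝ k p (Yk p) = -g p ∧ ‖fderiv ℝ k p (Yk p)‖ = 1) ∧
      ⟪fderiv ℝ k p (Xk p), fderiv ℝ k p (Yk p)⟫ = 1 ∧
      fderiv ℝ (fun q => fderiv ℝ k q (Yk q)) p (Xk p) = -k p := by
  classical
  -- The function whose germ on `U` agrees with `k`
  set F : ℝ × ℝ → EuclideanSpace ℝ (Fin (n + 1)) := fun q => fderiv ℝ g q (Y q) with hFdef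
  have hFsm : ContDiffOn ℝ (⊤ : ℕ∞) F U :=
    (hg.fderiv_of_isOpen hU (by simp)).clm_apply hYs
  have hgd : ∀ p ∈ U, DifferentiableAt ℝ g p := fun p hp =>
    (hg.differentiableOn (by simp)).differentiableAt (hU.mem_nhds hp)
  have hFd : ∀ p ∈ U, DifferentiableAt ℝ F p := fun p hp =>
    (hFsm.differentiableOn (by simp)).differentiableAt (hU.mem_nhds hp)
  have hkF : ∀ p ∈ U, fderiv ℝ k p = fderiv ℝ F p := fun p hp =>
    Filter.EventuallyEq.fderiv_eq (Filter.eventually_of_mem (hU.mem_nhds hp) hk)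
  -- `g p` is orthogonal to all tangent vectors
  have horth : ∀ p ∈ U, ∀ v, ⟪g p, fderiv ℝ g p v⟫ = 0 := by
    intro p hp v
    have h1 : (fun q => ⟪g q, g q⟫) =ᶠ[nhds p] fun _ => (1 : ℝ) := by
      filter_upwards [hU.mem_nhds hp] with q hq
      rw [real_inner_self_eq_norm_sq, hsph q hq]; norm_num
    have h2 : fderiv ℝ (fun q => ⟪g q, g q⟫) p = 0 := by
      rw [h1.fderiv_eq]; exact fderiv_const_apply (1 : ℝ)
    have h3 := fderiv_inner_apply (𝕜 := ℝ) (hgd p hp) (hgd p hp) v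
    rw [h2] at h3
    simp only [ContinuousLinearMap.zero_apply] at h3
    have h4 : ⟪fderiv ℝ g p v, g p⟫ = ⟪g p, fderiv ℝ g p v⟫ := real_inner_comm _ _
    rw [h4] at h3
    linarith
  -- key derivative identity: `⟪g, F⟫ = 0` on `U`, differentiate
  have hC : ∀ p ∈ U, ∀ v, ⟪g p, fderiv ℝ F p v⟫ = -⟪fderiv ℝ g p v, F p⟫ := by
    intro p hp v
    have h1 : (fun q => ⟪g q, F q⟫) =ᶠ[nhds p] fun _ => (0 : ℝ) := by
      filter_upwards [hU.mem_nhds hp] with q hq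
      exact horth q hq (Y q)
    have h2 : fderiv ℝ (fun q => ⟪g q, F q⟫) p = 0 := by
      rw [h1.fderiv_eq]; exact fderiv_const_apply (0 : ℝ)
    have h3 := fderiv_inner_apply (𝕜 := ℝ) (hgd p hp) (hFd p hp) v
    rw [h2] at h3
    simp only [ContinuousLinearMap.zero_apply] at h3
    linarith
  -- part (a) pointwise on all of U
  have keyA : ∀ p ∈ U, fderiv ℝ k p (Yk p) = -g p := by
    intro p hp
    set t : ℝ := ⟪fderiv ℝ g p (X p), fderiv ℝ g p (Y p)⟫ with ht
    have htne : t ≠ 0 := hXYne p hp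
    obtain ⟨c, hc⟩ := Submodule.mem_span_singleton.mp (hpar p hp)
    have hc' : fderiv ℝ F p (X p) = c • g p := hc.symm
    have hcid : ⟪g p, fderiv ℝ F p (X p)⟫ = c := by
      rw [hc', real_inner_smul_right, real_inner_self_eq_norm_sq, hsph p hp]
      ring
    have hcval : c = -t := by
      rw [← hcid, hC p hp (X p)]
    rw [hYk p hp, hkF p hp, map_smul, hc', hcval, ← ht]
    rw [smul_smul]
    rw [inv_mul_eq_div, neg_div, div_self htne]
    simp
  intro p hp
  set t : ℝ := ⟪fderiv ℝ g p (X p), fderiv ℝ g p (Y p)⟫ with ht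
  have ha := keyA p hp
  refine ⟨⟨ha, ?_⟩, ?_, ?_⟩
  · rw [ha, norm_neg, hsph p hp]
  · -- part (b)
    rw [ha, hXk p hp, hkF p hp]
    have h1 : ⟪fderiv ℝ g p (Y p), F p⟫ = 1 := by
      show ⟪fderiv ℝ g p (Y p), fderiv ℝ g p (Y p)⟫ = 1
      rw [real_inner_self_eq_norm_sq, hYunit p hp]; norm_num
    have h2 := hC p hp (Y p)
    rw [h1] at h2
    rw [inner_neg_right, real_inner_comm, h2]
    ring
  · -- part (c)
    have h1 : (fun q => fderiv ℝ k q (Yk q)) =ᶠ[nhds p] fun q => -g q := by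
      filter_upwards [hU.mem_nhds hp] with q hq
      exact keyA q hq
    rw [h1.fderiv_eq, hXk p hp]
    have h2 : fderiv ℝ (fun q => -g q) p = -fderiv ℝ g p := fderiv_neg
    rw [h2, ContinuousLinearMap.neg_apply, hk p hp]
end

section
/- Let h : L² → ℝ^{n+1} (n ≥ 3) be an immersed surface with flat normal bundle, and X, Y an orthonormal frame diagonalizing the second fundamental form (α_h(X,Y) = 0). Assume ∇^h_X X ≠ 0, ∇^h_Y Y ≠ 0, and α_h(X,X) ≠ 0 at every point. Then g := h_*X maps into S^n, and: g_*Y = −⟨∇^h_Y Y, X⟩ h_*Y ≠ 0 and g_*X = ⟨∇^h_X X, Y⟩ h_*Y + α_h(X,X); in particular g is an immersion. -/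
open scoped RealInnerProductSpace

/-- Component of `v` normal to the surface `h : L² → ℝ^{n+1}` at `p` (orthogonal to the
tangent plane `span {h_u, h_v}`). -/
noncomputable def euclNormal {n : ℕ} (h : ℝ × ℝ → EuclideanSpace ℝ (Fin (n + 1)))
    (p : ℝ × ℝ) (v : EuclideanSpace ℝ (Fin (n + 1))) : EuclideanSpace ℝ (Fin (n + 1)) :=
  v - (Submodule.orthogonalProjection
      (Submodule.span ℝ {fderiv ℝ h p (1, 0), fderiv ℝ h p (0, 1)}) v :
    EuclideanSpace ℝ (Fin (n + 1)))

private lemma plane_combo {Xp Yp : ℝ × ℝ}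
    (hli : ∀ s t : ℝ, s • Xp + t • Yp = 0 → s = 0 ∧ t = 0) (v : ℝ × ℝ) :
    ∃ s t : ℝ, v = s • Xp + t • Yp := by
  have hd0 : Xp.1 * Yp.2 - Xp.2 * Yp.1 ≠ 0 := by
    intro h0
    have h1 := hli Yp.2 (-Xp.2) (by
      simp only [Prod.ext_iff, Prod.fst_add, Prod.snd_add, Prod.smul_fst, Prod.smul_snd,
        smul_eq_mul, Prod.fst_zero, Prod.snd_zero]
      exact ⟨by linear_combination h0, by ring⟩)
    have h2 := hli (-Yp.1) Xp.1 (by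
      simp only [Prod.ext_iff, Prod.fst_add, Prod.snd_add, Prod.smul_fst, Prod.smul_snd,
        smul_eq_mul, Prod.fst_zero, Prod.snd_zero]
      exact ⟨by ring, by linear_combination h0⟩)
    have h3 := hli 1 0 (by
      have hA : Xp.1 = 0 := h2.2
      have hB : Xp.2 = 0 := neg_eq_zero.mp h1.2
      simp [Prod.ext_iff, hA, hB])
    exact one_ne_zero h3.1
  refine ⟨(v.1 * Yp.2 - v.2 * Yp.1) / (Xp.1 * Yp.2 - Xp.2 * Yp.1),
    (v.2 * Xp.1 - v.1 * Xp.2) / (Xp.1 * Yp.2 - Xp.2 * Yp.1), ?_⟩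
  simp only [Prod.ext_iff, Prod.fst_add, Prod.snd_add, Prod.smul_fst, Prod.smul_snd, smul_eq_mul]
  constructor <;> (rw [div_mul_eq_mul_div, div_mul_eq_mul_div, ← add_div, eq_div_iff hd0]; ring)

/-- Theorem 8 (direct part): let `h : L² → ℝ^{n+1}` be an immersed surface, `X, Y` an
orthonormal frame diagonalizing its second fundamental form (`α_h(X,Y) = 0`), with
`∇^h_X X ≠ 0`, `∇^h_Y Y ≠ 0` and `α_h(X,X) ≠ 0` everywhere.  Then `g := h_*X` maps into
`Sⁿ`, `g_*Y = −⟨∇^h_Y Y, X⟩ h_*Y ≠ 0`, `g_*X = ⟨∇^h_X X, Y⟩ h_*Y + α_h(X,X)`, and `g`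
is an immersion. -/
theorem stmt_9 {n : ℕ} (hn : 3 ≤ n) (U : Set (ℝ × ℝ)) (hU : IsOpen U)
    (h : ℝ × ℝ → EuclideanSpace ℝ (Fin (n + 1)))
    (hh : ContDiffOn ℝ (⊤ : ℕ∞) h U)
    (himm : ∀ p ∈ U, Function.Injective ⇑(fderiv ℝ h p))
    (X Y : ℝ × ℝ → ℝ × ℝ)
    (hXs : ContDiffOn ℝ (⊤ : ℕ∞) X U) (hYs : ContDiffOn ℝ (⊤ : ℕ∞) Y U)
    -- X, Y is an orthonormal frame in the metric induced by h
    (hXunit : ∀ p ∈ U, ‖fderiv ℝ h p (X p)‖ = 1)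
    (hYunit : ∀ p ∈ U, ‖fderiv ℝ h p (Y p)‖ = 1)
    (hXY : ∀ p ∈ U, ⟪fderiv ℝ h p (X p), fderiv ℝ h p (Y p)⟫ = 0)
    -- the frame diagonalizes the second fundamental form: α_h(X,Y) = 0
    (hdiag : ∀ p ∈ U,
      euclNormal h p (fderiv ℝ (fun q => fderiv ℝ h q (Y q)) p (X p)) = 0)
    -- integral curves of X and Y are nowhere geodesics: ⟨∇^h_X X, Y⟩ ≠ 0, ⟨∇^h_Y Y, X⟩ ≠ 0
    (hXgeo : ∀ p ∈ U,
      ⟪fderiv ℝ (fun q => fderiv ℝ h q (X q)) p (X p), fderiv ℝ h p (Y p)⟫ ≠ 0)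
    (hYgeo : ∀ p ∈ U,
      ⟪fderiv ℝ (fun q => fderiv ℝ h q (Y q)) p (Y p), fderiv ℝ h p (X p)⟫ ≠ 0)
    -- integral curves of X are nowhere asymptotic: α_h(X,X) ≠ 0
    (hasym : ∀ p ∈ U,
      euclNormal h p (fderiv ℝ (fun q => fderiv ℝ h q (X q)) p (X p)) ≠ 0)
    (g : ℝ × ℝ → EuclideanSpace ℝ (Fin (n + 1)))
    (hgdef : ∀ q ∈ U, g q = fderiv ℝ h q (X q)) :
    ∀ p ∈ U,
      ‖g p‖ = 1 ∧
      (fderiv ℝ g p (Y p) =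
          -(⟪fderiv ℝ (fun q => fderiv ℝ h q (Y q)) p (Y p), fderiv ℝ h p (X p)⟫) •
            fderiv ℝ h p (Y p) ∧
        fderiv ℝ g p (Y p) ≠ 0) ∧
      fderiv ℝ g p (X p) =
        ⟪fderiv ℝ (fun q => fderiv ℝ h q (X q)) p (X p), fderiv ℝ h p (Y p)⟫ •
            fderiv ℝ h p (Y p) +
          euclNormal h p (fderiv ℝ (fun q => fderiv ℝ h q (X q)) p (X p)) ∧
      Function.Injective ⇑(fderiv ℝ g p) := by
  intro p hp
  have hUnhds : U ∈ nhds p := hU.mem_nhds hp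
  have hhp : ContDiffAt ℝ (⊤ : ℕ∞) h p := (hh p hp).contDiffAt hUnhds
  have hXp : ContDiffAt ℝ (⊤ : ℕ∞) X p := (hXs p hp).contDiffAt hUnhds
  have hYp : ContDiffAt ℝ (⊤ : ℕ∞) Y p := (hYs p hp).contDiffAt hUnhds
  have hdX : DifferentiableAt ℝ X p := hXp.differentiableAt (by simp)
  have hdY : DifferentiableAt ℝ Y p := hYp.differentiableAt (by simp)
  have hdA : DifferentiableAt ℝ (fderiv ℝ h) p :=
    (hhp.fderiv_right (m := 1) (WithTop.coe_le_coe.mpr le_top)).differentiableAt one_ne_zero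
  have hdF : DifferentiableAt ℝ (fun q => fderiv ℝ h q (X q)) p := hdA.clm_apply hdX
  have hdG : DifferentiableAt ℝ (fun q => fderiv ℝ h q (Y q)) p := hdA.clm_apply hdY
  -- inner product facts for the orthonormal frame
  have he11 : ⟪fderiv ℝ h p (X p), fderiv ℝ h p (X p)⟫ = 1 := by
    rw [real_inner_self_eq_norm_sq, hXunit p hp]; norm_num
  have he22 : ⟪fderiv ℝ h p (Y p), fderiv ℝ h p (Y p)⟫ = 1 := by
    rw [real_inner_self_eq_norm_sq, hYunit p hp]; norm_num
  have he12 : ⟪fderiv ℝ h p (X p), fderiv ℝ h p (Y p)⟫ = 0 := hXY p hp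
  have he21 : ⟪fderiv ℝ h p (Y p), fderiv ℝ h p (X p)⟫ = 0 := by
    rw [real_inner_comm]; exact he12
  -- Step A : the derivative of the unit field h_*X is orthogonal to h_*X
  have stepA : ∀ v : ℝ × ℝ,
      ⟪fderiv ℝ (fun q => fderiv ℝ h q (X q)) p v, fderiv ℝ h p (X p)⟫ = 0 := by
    intro v
    have hconst : (fun q => ⟪fderiv ℝ h q (X q), fderiv ℝ h q (X q)⟫) =ᶠ[nhds p]
        fun _ => (1 : ℝ) := by
      filter_upwards [hUnhds] with q hq
      rw [real_inner_self_eq_norm_sq, hXunit q hq]; norm_num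
    have hz : fderiv ℝ (fun q => ⟪fderiv ℝ h q (X q), fderiv ℝ h q (X q)⟫) p = 0 := by
      rw [hconst.fderiv_eq]; exact fderiv_const_apply _
    have h2 := fderiv_inner_apply (𝕜 := ℝ) hdF hdF v
    rw [hz] at h2
    simp only [ContinuousLinearMap.zero_apply] at h2
    have h3 := real_inner_comm (fderiv ℝ h p (X p))
      (fderiv ℝ (fun q => fderiv ℝ h q (X q)) p v)
    linarith
  -- Step B : differentiating ⟨h_*X, h_*Y⟩ = 0
  have stepB : ∀ v : ℝ × ℝ,
      ⟪fderiv ℝ h p (X p), fderiv ℝ (fun q => fderiv ℝ h q (Y q)) p v⟫ +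
        ⟪fderiv ℝ (fun q => fderiv ℝ h q (X q)) p v, fderiv ℝ h p (Y p)⟫ = 0 := by
    intro v
    have hconst : (fun q => ⟪fderiv ℝ h q (X q), fderiv ℝ h q (Y q)⟫) =ᶠ[nhds p]
        fun _ => (0 : ℝ) := by
      filter_upwards [hUnhds] with q hq using hXY q hq
    have hz : fderiv ℝ (fun q => ⟪fderiv ℝ h q (X q), fderiv ℝ h q (Y q)⟫) p = 0 := by
      rw [hconst.fderiv_eq]; exact fderiv_const_apply _
    have h2 := fderiv_inner_apply (𝕜 := ℝ) hdF hdG v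
    rw [hz] at h2
    simp only [ContinuousLinearMap.zero_apply] at h2
    linarith
  -- linear independence of e1, e2 and of X p, Y p
  have hind : ∀ s t : ℝ,
      s • fderiv ℝ h p (X p) + t • fderiv ℝ h p (Y p) = 0 → s = 0 ∧ t = 0 := by
    intro s t hst
    constructor
    · have h1 := congrArg (fun z => ⟪z, fderiv ℝ h p (X p)⟫) hst
      simp only [inner_add_left, real_inner_smul_left, he11, he21, inner_zero_left,
        mul_one, mul_zero, add_zero] at h1
      exact h1
    · have h1 := congrArg (fun z => ⟪z, fderiv ℝ h p (Y p)⟫) hst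
      simp only [inner_add_left, real_inner_smul_left, he12, he22, inner_zero_left,
        mul_one, mul_zero, zero_add] at h1
      exact h1
  have hliXY : ∀ s t : ℝ, s • X p + t • Y p = 0 → s = 0 ∧ t = 0 := by
    intro s t hst
    apply hind s t
    have := congrArg (fderiv ℝ h p) hst
    simpa [map_add, map_smul] using this
  -- the tangent plane
  have hmemA : ∀ w : ℝ × ℝ, fderiv ℝ h p w ∈
      Submodule.span ℝ {fderiv ℝ h p (1, 0), fderiv ℝ h p (0, 1)} := by
    intro w
    have hw : w = w.1 • ((1 : ℝ), (0 : ℝ)) + w.2 • ((0 : ℝ), (1 : ℝ)) := by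
      simp [Prod.ext_iff]
    rw [hw, map_add, map_smul, map_smul]
    exact Submodule.add_mem _
      (Submodule.smul_mem _ _ (Submodule.subset_span (by simp)))
      (Submodule.smul_mem _ _ (Submodule.subset_span (by simp)))
  have hE10 : ∃ s t : ℝ,
      fderiv ℝ h p (1, 0) = s • fderiv ℝ h p (X p) + t • fderiv ℝ h p (Y p) := by
    obtain ⟨s, t, hst⟩ := plane_combo hliXY (1, 0)
    exact ⟨s, t, by rw [hst, map_add, map_smul, map_smul]⟩
  have hE01 : ∃ s t : ℝ,
      fderiv ℝ h p (0, 1) = s • fderiv ℝ h p (X p) + t • fderiv ℝ h p (Y p) := by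
    obtain ⟨s, t, hst⟩ := plane_combo hliXY (0, 1)
    exact ⟨s, t, by rw [hst, map_add, map_smul, map_smul]⟩
  -- decomposition of an ambient vector into tangential and normal parts
  have hbase : ∀ v : EuclideanSpace ℝ (Fin (n + 1)),
      ∀ w ∈ Submodule.span ℝ {fderiv ℝ h p (1, 0), fderiv ℝ h p (0, 1)},
      ⟪v - (⟪v, fderiv ℝ h p (X p)⟫ • fderiv ℝ h p (X p) +
        ⟪v, fderiv ℝ h p (Y p)⟫ • fderiv ℝ h p (Y p)), w⟫ = 0 := by
    intro v w hw
    have hb1 : ⟪v - (⟪v, fderiv ℝ h p (X p)⟫ • fderiv ℝ h p (X p) +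
        ⟪v, fderiv ℝ h p (Y p)⟫ • fderiv ℝ h p (Y p)), fderiv ℝ h p (X p)⟫ = 0 := by
      simp only [inner_sub_left, inner_add_left, real_inner_smul_left, he11, he21,
        mul_one, mul_zero, add_zero, sub_self]
    have hb2 : ⟪v - (⟪v, fderiv ℝ h p (X p)⟫ • fderiv ℝ h p (X p) +
        ⟪v, fderiv ℝ h p (Y p)⟫ • fderiv ℝ h p (Y p)), fderiv ℝ h p (Y p)⟫ = 0 := by
      simp only [inner_sub_left, inner_add_left, real_inner_smul_left, he12, he22,
        mul_one, mul_zero, zero_add, sub_self]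
    obtain ⟨a, b, hab⟩ := Submodule.mem_span_pair.mp hw
    obtain ⟨s1, t1, h10⟩ := hE10
    obtain ⟨s2, t2, h01⟩ := hE01
    rw [← hab, h10, h01]
    simp only [inner_add_right, real_inner_smul_right, hb1, hb2, mul_zero, add_zero]
  have hdecomp : ∀ v : EuclideanSpace ℝ (Fin (n + 1)),
      v = ⟪v, fderiv ℝ h p (X p)⟫ • fderiv ℝ h p (X p) +
          ⟪v, fderiv ℝ h p (Y p)⟫ • fderiv ℝ h p (Y p) + euclNormal h p v := by
    intro v
    have hproj : (Submodule.orthogonalProjection (Submodule.span ℝ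
        {fderiv ℝ h p (1, 0), fderiv ℝ h p (0, 1)}) v : EuclideanSpace ℝ (Fin (n + 1))) =
        ⟪v, fderiv ℝ h p (X p)⟫ • fderiv ℝ h p (X p) +
          ⟪v, fderiv ℝ h p (Y p)⟫ • fderiv ℝ h p (Y p) :=
      Submodule.eq_starProjection_of_mem_of_inner_eq_zero
        (Submodule.add_mem _ (Submodule.smul_mem _ _ (hmemA (X p)))
          (Submodule.smul_mem _ _ (hmemA (Y p)))) (hbase v)
    have hnv : euclNormal h p v = v - (⟪v, fderiv ℝ h p (X p)⟫ • fderiv ℝ h p (X p) +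
        ⟪v, fderiv ℝ h p (Y p)⟫ • fderiv ℝ h p (Y p)) := by
      simp only [euclNormal]; rw [hproj]
    rw [hnv]; abel
  -- basic properties of euclNormal
  have hNsub : ∀ v w : EuclideanSpace ℝ (Fin (n + 1)),
      euclNormal h p (v - w) = euclNormal h p v - euclNormal h p w := by
    intro v w
    simp only [euclNormal, map_sub, Submodule.coe_sub]
    abel
  have hNzero : ∀ v ∈ Submodule.span ℝ {fderiv ℝ h p (1, 0), fderiv ℝ h p (0, 1)},
      euclNormal h p v = 0 := by
    intro v hv
    simp only [euclNormal]; exact sub_eq_zero.mpr (Submodule.starProjection_eq_self_iff.mpr hv).symm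
  have hNperp : ∀ v : EuclideanSpace ℝ (Fin (n + 1)),
      ⟪fderiv ℝ h p (Y p), euclNormal h p v⟫ = 0 := by
    intro v
    have h1 : euclNormal h p v ∈
        (Submodule.span ℝ {fderiv ℝ h p (1, 0), fderiv ℝ h p (0, 1)})ᗮ :=
      Submodule.sub_starProjection_mem_orthogonal v
    exact ((Submodule.mem_orthogonal _ _).mp h1) _ (hmemA (Y p))
  -- symmetry of the second fundamental form: normal part of D_Y (h_*X) vanishes
  have hFY : fderiv ℝ (fun q => fderiv ℝ h q (X q)) p (Y p) =
      fderiv ℝ h p (fderiv ℝ X p (Y p)) + fderiv ℝ (fderiv ℝ h) p (Y p) (X p) := by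
    rw [fderiv_clm_apply hdA hdX]
    simp
  have hGX : fderiv ℝ (fun q => fderiv ℝ h q (Y q)) p (X p) =
      fderiv ℝ h p (fderiv ℝ Y p (X p)) + fderiv ℝ (fderiv ℝ h) p (X p) (Y p) := by
    rw [fderiv_clm_apply hdA hdY]
    simp
  have htan : euclNormal h p (fderiv ℝ (fun q => fderiv ℝ h q (X q)) p (Y p)) = 0 := by
    have hsymm := (hhp.isSymmSndFDerivAt (by rw [minSmoothness_of_isRCLikeNormedField]; exact WithTop.coe_le_coe.mpr le_top)) (Y p) (X p)
    have hdiff : fderiv ℝ (fun q => fderiv ℝ h q (X q)) p (Y p) -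
        fderiv ℝ (fun q => fderiv ℝ h q (Y q)) p (X p) =
        fderiv ℝ h p (fderiv ℝ X p (Y p) - fderiv ℝ Y p (X p)) := by
      rw [hFY, hGX, map_sub, hsymm]; abel
    have h2 : euclNormal h p (fderiv ℝ (fun q => fderiv ℝ h q (X q)) p (Y p)) -
        euclNormal h p (fderiv ℝ (fun q => fderiv ℝ h q (Y q)) p (X p)) = 0 := by
      rw [← hNsub, hdiff]; exact hNzero _ (hmemA _)
    rw [hdiag p hp, sub_zero] at h2
    exact h2
  -- the two formulas for the derivative of g
  have hTY : fderiv ℝ (fun q => fderiv ℝ h q (X q)) p (Y p) =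
      -(⟪fderiv ℝ (fun q => fderiv ℝ h q (Y q)) p (Y p), fderiv ℝ h p (X p)⟫) •
        fderiv ℝ h p (Y p) := by
    have hd := hdecomp (fderiv ℝ (fun q => fderiv ℝ h q (X q)) p (Y p))
    have hc2 : ⟪fderiv ℝ (fun q => fderiv ℝ h q (X q)) p (Y p), fderiv ℝ h p (Y p)⟫ =
        -⟪fderiv ℝ (fun q => fderiv ℝ h q (Y q)) p (Y p), fderiv ℝ h p (X p)⟫ := by
      have h2 := stepB (Y p)
      have h3 := real_inner_comm (fderiv ℝ (fun q => fderiv ℝ h q (Y q)) p (Y p))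
        (fderiv ℝ h p (X p))
      linarith
    rw [stepA (Y p), hc2, htan] at hd
    simp only [zero_smul, zero_add, add_zero] at hd
    simp only [neg_smul] at hd ⊢
    exact hd
  have he2ne : fderiv ℝ h p (Y p) ≠ 0 := by
    intro h0
    rw [h0, inner_zero_left] at he22
    exact zero_ne_one he22
  have hTYne : fderiv ℝ (fun q => fderiv ℝ h q (X q)) p (Y p) ≠ 0 := by
    rw [hTY]
    exact smul_ne_zero (neg_ne_zero.mpr (hYgeo p hp)) he2ne
  have hTX : fderiv ℝ (fun q => fderiv ℝ h q (X q)) p (X p) =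
      ⟪fderiv ℝ (fun q => fderiv ℝ h q (X q)) p (X p), fderiv ℝ h p (Y p)⟫ •
        fderiv ℝ h p (Y p) +
        euclNormal h p (fderiv ℝ (fun q => fderiv ℝ h q (X q)) p (X p)) := by
    have hd := hdecomp (fderiv ℝ (fun q => fderiv ℝ h q (X q)) p (X p))
    rw [stepA (X p)] at hd
    simp only [zero_smul, zero_add, add_zero] at hd
    exact hd
  -- injectivity of the derivative of g
  have hker : ∀ v : ℝ × ℝ, fderiv ℝ (fun q => fderiv ℝ h q (X q)) p v = 0 → v = 0 := by
    intro v hv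
    obtain ⟨s, t, rfl⟩ := plane_combo hliXY v
    rw [map_add, map_smul, map_smul, hTX, hTY] at hv
    set N := euclNormal h p (fderiv ℝ (fun q => fderiv ℝ h q (X q)) p (X p)) with hN
    set b := ⟪fderiv ℝ (fun q => fderiv ℝ h q (X q)) p (X p), fderiv ℝ h p (Y p)⟫ with hb
    set c := ⟪fderiv ℝ (fun q => fderiv ℝ h q (Y q)) p (Y p), fderiv ℝ h p (X p)⟫ with hc
    have hperpN : ⟪fderiv ℝ h p (Y p), N⟫ = 0 := hNperp _
    have hNne : N ≠ 0 := hasym p hp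
    have hNN : ⟪N, N⟫ ≠ 0 := fun h0 => hNne (inner_self_eq_zero.mp h0)
    have hperpN' : ⟪N, fderiv ℝ h p (Y p)⟫ = 0 := by
      rw [real_inner_comm]; exact hperpN
    have hs : s = 0 := by
      have h1 := congrArg (fun z => ⟪z, N⟫) hv
      simp only [inner_add_left, real_inner_smul_left, inner_neg_left, inner_zero_left,
        hperpN, hperpN', mul_zero, zero_add, add_zero, neg_zero, mul_neg, neg_mul,
        zero_mul] at h1
      exact (mul_eq_zero.mp h1).resolve_right hNN
    have ht : t = 0 := by
      rw [hs, zero_smul, zero_add] at hv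
      have h1 := congrArg (fun z => ⟪z, fderiv ℝ h p (Y p)⟫) hv
      simp only [real_inner_smul_left, inner_neg_left, inner_zero_left, he22, mul_one,
        mul_neg, neg_mul, neg_eq_zero] at h1
      rcases mul_eq_zero.mp h1 with h2 | h2
      · exact h2
      · exact absurd h2 (hYgeo p hp)
    rw [hs, ht]
    simp
  -- assemble everything
  have hgF : g =ᶠ[nhds p] fun q => fderiv ℝ h q (X q) := by
    filter_upwards [hUnhds] with q hq using hgdef q hq
  have hfg : fderiv ℝ g p = fderiv ℝ (fun q => fderiv ℝ h q (X q)) p := hgF.fderiv_eq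
  refine ⟨by rw [hgdef p hp]; exact hXunit p hp, ⟨?_, ?_⟩, ?_, ?_⟩
  · rw [hfg]; exact hTY
  · rw [hfg]; exact hTYne
  · rw [hfg]; exact hTX
  · rw [hfg]
    intro a b hab
    have h0 : fderiv ℝ (fun q => fderiv ℝ h q (X q)) p (a - b) = 0 := by
      rw [map_sub, hab, sub_self]
    exact sub_eq_zero.mp (hker _ h0)
end

section
/- In the setting of Theorem 8, define Ŷ := Y / ⟨∇^h_Y Y, X⟩. Then Ŷ has unit length with respect to the metric induced by g = h_*X, the ambient derivative satisfies ∇̃_X (g_* Ŷ) = ⟨∇^h_X X, Y⟩ g, and ⟨g_* X, g_* Ŷ⟩ ≠ 0. Hence g is a surface of type D with vector fields X̂ = X and Ŷ. -/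
open scoped RealInnerProductSpace

/-! ### Auxiliary lemmas -/

lemma aux_hasFDerivAt {n : ℕ} (U : Set (ℝ × ℝ)) (hU : IsOpen U)
    (h : ℝ × ℝ → EuclideanSpace ℝ (Fin (n + 1))) (hh : ContDiffOn ℝ (⊤ : ℕ∞) h U)
    (X : ℝ × ℝ → ℝ × ℝ) (hXs : ContDiffOn ℝ (⊤ : ℕ∞) X U) {q : ℝ × ℝ} (hq : q ∈ U) :
    HasFDerivAt (fun r => fderiv ℝ h r (X r))
      ((fderiv ℝ h q).comp (fderiv ℝ X q) + (fderiv ℝ (fderiv ℝ h) q).flip (X q)) q := by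
  have hF : ContDiffOn ℝ (⊤ : ℕ∞) (fderiv ℝ h) U := hh.fderiv_of_isOpen hU (by simp)
  have h1 : DifferentiableAt ℝ (fderiv ℝ h) q :=
    (hF.contDiffAt (hU.mem_nhds hq)).differentiableAt (by simp)
  have h2 : DifferentiableAt ℝ X q :=
    (hXs.contDiffAt (hU.mem_nhds hq)).differentiableAt (by simp)
  exact h1.hasFDerivAt.clm_apply h2.hasFDerivAt

lemma aux_fderiv_apply {n : ℕ} (U : Set (ℝ × ℝ)) (hU : IsOpen U)
    (h : ℝ × ℝ → EuclideanSpace ℝ (Fin (n + 1))) (hh : ContDiffOn ℝ (⊤ : ℕ∞) h U)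
    (X : ℝ × ℝ → ℝ × ℝ) (hXs : ContDiffOn ℝ (⊤ : ℕ∞) X U) {q : ℝ × ℝ} (hq : q ∈ U) (v : ℝ × ℝ) :
    fderiv ℝ (fun r => fderiv ℝ h r (X r)) q v =
      fderiv ℝ h q (fderiv ℝ X q v) + fderiv ℝ (fderiv ℝ h) q v (X q) := by
  rw [(aux_hasFDerivAt U hU h hh X hXs hq).fderiv]
  rfl

lemma euclNormal_tangent {n : ℕ} (h : ℝ × ℝ → EuclideanSpace ℝ (Fin (n + 1)))
    (q : ℝ × ℝ) (w : ℝ × ℝ) : euclNormal h q (fderiv ℝ h q w) = 0 := by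
  have hw : w = w.1 • ((1 : ℝ), (0 : ℝ)) + w.2 • ((0 : ℝ), (1 : ℝ)) := by
    ext <;> simp
  have hmem : fderiv ℝ h q w ∈
      Submodule.span ℝ {fderiv ℝ h q (1, 0), fderiv ℝ h q (0, 1)} := by
    rw [hw, map_add, map_smul, map_smul]
    exact Submodule.add_mem _
      (Submodule.smul_mem _ _ (Submodule.subset_span (by simp)))
      (Submodule.smul_mem _ _ (Submodule.subset_span (by simp)))
  rw [euclNormal]; exact sub_eq_zero.mpr (Submodule.starProjection_eq_self_iff.mpr hmem).symm

lemma euclNormal_add {n : ℕ} (h : ℝ × ℝ → EuclideanSpace ℝ (Fin (n + 1)))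
    (q : ℝ × ℝ) (v w : EuclideanSpace ℝ (Fin (n + 1))) :
    euclNormal h q (v + w) = euclNormal h q v + euclNormal h q w := by
  simp only [euclNormal, map_add]
  push_cast
  abel

lemma euclNormal_mem {n : ℕ} (h : ℝ × ℝ → EuclideanSpace ℝ (Fin (n + 1)))
    (q : ℝ × ℝ) (v : EuclideanSpace ℝ (Fin (n + 1))) (hv : euclNormal h q v = 0) :
    v ∈ Submodule.span ℝ {fderiv ℝ h q (1, 0), fderiv ℝ h q (0, 1)} := by
  rw [euclNormal, sub_eq_zero] at hv
  rw [hv]; exact SetLike.coe_mem _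

lemma r2_comb (x y w : ℝ × ℝ) (hd : x.1 * y.2 - x.2 * y.1 ≠ 0) :
    w = ((w.1 * y.2 - w.2 * y.1) / (x.1 * y.2 - x.2 * y.1)) • x +
        ((x.1 * w.2 - x.2 * w.1) / (x.1 * y.2 - x.2 * y.1)) • y := by
  ext <;> (simp only [Prod.fst_add, Prod.snd_add, Prod.smul_fst, Prod.smul_snd, smul_eq_mul];
           rw [div_mul_eq_mul_div, div_mul_eq_mul_div, ← add_div, eq_div_iff hd]; ring)

/-- If `v` has no normal component then it is a combination of the orthonormal tangent
vectors `fderiv h q x` and `fderiv h q y`, with coefficients given by inner products. -/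
lemma decomp_aux {n : ℕ} (h : ℝ × ℝ → EuclideanSpace ℝ (Fin (n + 1))) (q : ℝ × ℝ)
    (x y : ℝ × ℝ) (hx : ‖fderiv ℝ h q x‖ = 1) (hy : ‖fderiv ℝ h q y‖ = 1)
    (hxy : ⟪fderiv ℝ h q x, fderiv ℝ h q y⟫ = 0)
    (v : EuclideanSpace ℝ (Fin (n + 1))) (hv : euclNormal h q v = 0) :
    v = ⟪v, fderiv ℝ h q x⟫ • fderiv ℝ h q x + ⟪v, fderiv ℝ h q y⟫ • fderiv ℝ h q y := by
  set T := fderiv ℝ h q with hT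
  have hTx : ⟪T x, T x⟫ = 1 := by
    rw [real_inner_self_eq_norm_mul_norm, hx]; norm_num
  have hTy : ⟪T y, T y⟫ = 1 := by
    rw [real_inner_self_eq_norm_mul_norm, hy]; norm_num
  have hyx : ⟪T y, T x⟫ = 0 := by rw [real_inner_comm]; exact hxy
  have hd : x.1 * y.2 - x.2 * y.1 ≠ 0 := by
    intro h0
    have key : ∀ a b : ℝ, a • T x - b • T y = 0 → a = 0 ∧ b = 0 := by
      intro a b hab
      constructor
      · have h1 := congrArg (fun z => ⟪z, T x⟫) hab
        simp only [inner_sub_left, real_inner_smul_left, hTx, hyx, inner_zero_left,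
          mul_one, mul_zero, sub_zero] at h1
        exact h1
      · have h2 := congrArg (fun z => ⟪z, T y⟫) hab
        simp only [inner_sub_left, real_inner_smul_left, hTy, hxy, inner_zero_left,
          mul_one, mul_zero, sub_zero, zero_sub, neg_eq_zero] at h2
        exact h2
    have e1 : y.2 • x - x.2 • y = (0, 0) := by
      apply Prod.ext <;> simp only [Prod.fst_sub, Prod.snd_sub, Prod.smul_fst,
        Prod.smul_snd, smul_eq_mul]
      · linear_combination h0
      · ring
    have e2 : y.1 • x - x.1 • y = (0, 0) := by
      apply Prod.ext <;> simp only [Prod.fst_sub, Prod.snd_sub, Prod.smul_fst,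
        Prod.smul_snd, smul_eq_mul]
      · ring
      · linear_combination -h0
    have t1 : y.2 • T x - x.2 • T y = 0 := by
      rw [← map_smul, ← map_smul, ← map_sub, e1]
      exact map_zero T
    have t2 : y.1 • T x - x.1 • T y = 0 := by
      rw [← map_smul, ← map_smul, ← map_sub, e2]
      exact map_zero T
    obtain ⟨hy2, hx2⟩ := key _ _ t1
    obtain ⟨hy1, hx1⟩ := key _ _ t2
    have hx0 : x = 0 := by ext <;> simp [hx1, hx2]
    rw [hx0] at hx
    simp at hx
  obtain ⟨α, β, hab⟩ := Submodule.mem_span_pair.mp (euclNormal_mem h q v hv)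
  have hvT : v = T (α, β) := by
    rw [← hab]
    have : ((α : ℝ), (β : ℝ)) = α • ((1:ℝ),(0:ℝ)) + β • ((0:ℝ),(1:ℝ)) := by ext <;> simp
    rw [this, map_add, map_smul, map_smul]
  set a := ((α * y.2 - β * y.1) / (x.1 * y.2 - x.2 * y.1)) with ha
  set b := ((x.1 * β - x.2 * α) / (x.1 * y.2 - x.2 * y.1)) with hb
  have hcomb : ((α : ℝ), (β : ℝ)) = a • x + b • y := r2_comb x y (α, β) hd
  have hv2 : v = a • T x + b • T y := by rw [hvT, hcomb, map_add, map_smul, map_smul]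
  have hva : ⟪v, T x⟫ = a := by
    rw [hv2]
    simp only [inner_add_left, real_inner_smul_left, hTx, hyx, mul_one, mul_zero, add_zero]
  have hvb : ⟪v, T y⟫ = b := by
    rw [hv2]
    simp only [inner_add_left, real_inner_smul_left, hTy, hxy, mul_one, mul_zero, zero_add]
  rw [hva, hvb]; exact hv2

lemma inner_const_deriv {E : Type*} [NormedAddCommGroup E] [InnerProductSpace ℝ E]
    (U : Set (ℝ × ℝ)) (hU : IsOpen U) (f₁ f₂ : ℝ × ℝ → E) (c : ℝ) {q : ℝ × ℝ} (hq : q ∈ U)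
    (h1 : DifferentiableAt ℝ f₁ q) (h2 : DifferentiableAt ℝ f₂ q)
    (hc : ∀ r ∈ U, ⟪f₁ r, f₂ r⟫ = c) (v : ℝ × ℝ) :
    ⟪f₁ q, fderiv ℝ f₂ q v⟫ + ⟪fderiv ℝ f₁ q v, f₂ q⟫ = 0 := by
  have heq : (fun r => ⟪f₁ r, f₂ r⟫) =ᶠ[nhds q] fun _ => c := by
    filter_upwards [hU.mem_nhds hq] with r hr using hc r hr
  have hz := heq.fderiv_eq (𝕜 := ℝ)
  calc ⟪f₁ q, fderiv ℝ f₂ q v⟫ + ⟪fderiv ℝ f₁ q v, f₂ q⟫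
      = fderiv ℝ (fun r => ⟪f₁ r, f₂ r⟫) q v := (fderiv_inner_apply ℝ h1 h2 v).symm
    _ = 0 := by rw [hz]; simp

/-- The key computation: `∇_Y (h_* X) = -⟨∇_Y(h_*Y), h_*X⟩ h_*Y` and
`∇_X (h_* Y) = -⟨∇_X(h_*X), h_*Y⟩ h_*X`. -/
lemma key_lemma {n : ℕ} (U : Set (ℝ × ℝ)) (hU : IsOpen U)
    (h : ℝ × ℝ → EuclideanSpace ℝ (Fin (n + 1))) (hh : ContDiffOn ℝ (⊤ : ℕ∞) h U)
    (X Y : ℝ × ℝ → ℝ × ℝ)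
    (hXs : ContDiffOn ℝ (⊤ : ℕ∞) X U) (hYs : ContDiffOn ℝ (⊤ : ℕ∞) Y U)
    (hXunit : ∀ p ∈ U, ‖fderiv ℝ h p (X p)‖ = 1)
    (hYunit : ∀ p ∈ U, ‖fderiv ℝ h p (Y p)‖ = 1)
    (hXY : ∀ p ∈ U, ⟪fderiv ℝ h p (X p), fderiv ℝ h p (Y p)⟫ = 0)
    (hdiag : ∀ p ∈ U,
      euclNormal h p (fderiv ℝ (fun q => fderiv ℝ h q (Y q)) p (X p)) = 0)
    {q : ℝ × ℝ} (hq : q ∈ U) :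
    fderiv ℝ (fun r => fderiv ℝ h r (X r)) q (Y q) =
      -⟪fderiv ℝ (fun r => fderiv ℝ h r (Y r)) q (Y q), fderiv ℝ h q (X q)⟫ •
        fderiv ℝ h q (Y q) ∧
    fderiv ℝ (fun r => fderiv ℝ h r (Y r)) q (X q) =
      -⟪fderiv ℝ (fun r => fderiv ℝ h r (X r)) q (X q), fderiv ℝ h q (Y q)⟫ •
        fderiv ℝ h q (X q) := by
  have dHX : DifferentiableAt ℝ (fun r => fderiv ℝ h r (X r)) q :=
    (aux_hasFDerivAt U hU h hh X hXs hq).differentiableAt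
  have dHY : DifferentiableAt ℝ (fun r => fderiv ℝ h r (Y r)) q :=
    (aux_hasFDerivAt U hU h hh Y hYs hq).differentiableAt
  -- orthogonality identities
  have o1 : ∀ v, ⟪fderiv ℝ (fun r => fderiv ℝ h r (X r)) q v, fderiv ℝ h q (X q)⟫ = 0 := by
    intro v
    have h0 := inner_const_deriv U hU _ _ 1 hq dHX dHX
      (fun r hr => by rw [real_inner_self_eq_norm_mul_norm, hXunit r hr]; norm_num) v
    have hc := real_inner_comm (fderiv ℝ h q (X q))
      (fderiv ℝ (fun r => fderiv ℝ h r (X r)) q v)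
    linarith
  have o2 : ∀ v, ⟪fderiv ℝ (fun r => fderiv ℝ h r (Y r)) q v, fderiv ℝ h q (Y q)⟫ = 0 := by
    intro v
    have h0 := inner_const_deriv U hU _ _ 1 hq dHY dHY
      (fun r hr => by rw [real_inner_self_eq_norm_mul_norm, hYunit r hr]; norm_num) v
    have hc := real_inner_comm (fderiv ℝ h q (Y q))
      (fderiv ℝ (fun r => fderiv ℝ h r (Y r)) q v)
    linarith
  have o3 : ∀ v, ⟪fderiv ℝ h q (X q), fderiv ℝ (fun r => fderiv ℝ h r (Y r)) q v⟫ +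
      ⟪fderiv ℝ (fun r => fderiv ℝ h r (X r)) q v, fderiv ℝ h q (Y q)⟫ = 0 :=
    fun v => inner_const_deriv U hU _ _ 0 hq dHX dHY (fun r hr => hXY r hr) v
  -- the normal component of ∇_Y (h_* X) vanishes
  have hsym : IsSymmSndFDerivAt ℝ h q :=
    (hh.contDiffAt (hU.mem_nhds hq)).isSymmSndFDerivAt
      (by rw [minSmoothness_of_isRCLikeNormedField]; exact WithTop.coe_le_coe.mpr le_top)
  have nHXY : euclNormal h q (fderiv ℝ (fun r => fderiv ℝ h r (X r)) q (Y q)) = 0 := by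
    rw [aux_fderiv_apply U hU h hh X hXs hq (Y q), euclNormal_add, euclNormal_tangent,
      zero_add, hsym (Y q) (X q)]
    have h2 := hdiag q hq
    rw [aux_fderiv_apply U hU h hh Y hYs hq (X q), euclNormal_add, euclNormal_tangent,
      zero_add] at h2
    exact h2
  constructor
  · have hdY := decomp_aux h q (X q) (Y q) (hXunit q hq) (hYunit q hq) (hXY q hq) _ nHXY
    have c1 : ⟪fderiv ℝ (fun r => fderiv ℝ h r (X r)) q (Y q), fderiv ℝ h q (Y q)⟫ =
        -⟪fderiv ℝ (fun r => fderiv ℝ h r (Y r)) q (Y q), fderiv ℝ h q (X q)⟫ := by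
      have h0 := o3 (Y q)
      have hc := real_inner_comm (fderiv ℝ h q (X q))
        (fderiv ℝ (fun r => fderiv ℝ h r (Y r)) q (Y q))
      linarith
    rw [o1 (Y q), c1] at hdY
    rw [hdY, zero_smul, zero_add]
  · have hdX := decomp_aux h q (X q) (Y q) (hXunit q hq) (hYunit q hq) (hXY q hq) _
      (hdiag q hq)
    have c2 : ⟪fderiv ℝ (fun r => fderiv ℝ h r (Y r)) q (X q), fderiv ℝ h q (X q)⟫ =
        -⟪fderiv ℝ (fun r => fderiv ℝ h r (X r)) q (X q), fderiv ℝ h q (Y q)⟫ := by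
      have h0 := o3 (X q)
      have hc := real_inner_comm (fderiv ℝ h q (X q))
        (fderiv ℝ (fun r => fderiv ℝ h r (Y r)) q (X q))
      linarith
    rw [o2 (X q), c2] at hdX
    rw [hdX, zero_smul, add_zero]

/-- Theorem 8 (completion of the direct part): with `h, X, Y` as before and
`Ŷ := Y / ⟨∇^h_Y Y, X⟩`, the field `Ŷ` has unit length in the metric induced by
`g = h_*X`, the ambient derivative satisfies `∇̃_X (g_*Ŷ) = ⟨∇^h_X X, Y⟩ g`
(so `g_*Ŷ` is parallel along `X` in `Sⁿ`), and `⟨g_*X, g_*Ŷ⟩ ≠ 0`; hence `g` is a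
surface of type `D` with the vector fields `X̂ = X` and `Ŷ`. -/
theorem stmt_10 {n : ℕ} (hn : 3 ≤ n) (U : Set (ℝ × ℝ)) (hU : IsOpen U)
    (h : ℝ × ℝ → EuclideanSpace ℝ (Fin (n + 1)))
    (hh : ContDiffOn ℝ (⊤ : ℕ∞) h U)
    (himm : ∀ p ∈ U, Function.Injective ⇑(fderiv ℝ h p))
    (X Y : ℝ × ℝ → ℝ × ℝ)
    (hXs : ContDiffOn ℝ (⊤ : ℕ∞) X U) (hYs : ContDiffOn ℝ (⊤ : ℕ∞) Y U)
    (hXunit : ∀ p ∈ U, ‖fderiv ℝ h p (X p)‖ = 1)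
    (hYunit : ∀ p ∈ U, ‖fderiv ℝ h p (Y p)‖ = 1)
    (hXY : ∀ p ∈ U, ⟪fderiv ℝ h p (X p), fderiv ℝ h p (Y p)⟫ = 0)
    (hdiag : ∀ p ∈ U,
      euclNormal h p (fderiv ℝ (fun q => fderiv ℝ h q (Y q)) p (X p)) = 0)
    (hXgeo : ∀ p ∈ U,
      ⟪fderiv ℝ (fun q => fderiv ℝ h q (X q)) p (X p), fderiv ℝ h p (Y p)⟫ ≠ 0)
    (hYgeo : ∀ p ∈ U,
      ⟪fderiv ℝ (fun q => fderiv ℝ h q (Y q)) p (Y p), fderiv ℝ h p (X p)⟫ ≠ 0)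
    (hasym : ∀ p ∈ U,
      euclNormal h p (fderiv ℝ (fun q => fderiv ℝ h q (X q)) p (X p)) ≠ 0)
    (g : ℝ × ℝ → EuclideanSpace ℝ (Fin (n + 1)))
    (hgdef : ∀ q ∈ U, g q = fderiv ℝ h q (X q))
    (Yhat : ℝ × ℝ → ℝ × ℝ)
    (hYhat : ∀ p ∈ U, Yhat p =
      (⟪fderiv ℝ (fun q => fderiv ℝ h q (Y q)) p (Y p), fderiv ℝ h p (X p)⟫)⁻¹ • Y p) :
    ∀ p ∈ U,
      ‖fderiv ℝ g p (Yhat p)‖ = 1 ∧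
      fderiv ℝ (fun q => fderiv ℝ g q (Yhat q)) p (X p) =
        ⟪fderiv ℝ (fun q => fderiv ℝ h q (X q)) p (X p), fderiv ℝ h p (Y p)⟫ • g p ∧
      ⟪fderiv ℝ g p (X p), fderiv ℝ g p (Yhat p)⟫ ≠ 0 := by
  intro p hp
  -- on U, the derivative of g agrees with that of h_* X
  have hfg : ∀ q ∈ U, fderiv ℝ g q = fderiv ℝ (fun r => fderiv ℝ h r (X r)) q := by
    intro q hq
    exact Filter.EventuallyEq.fderiv_eq
      (Filter.eventuallyEq_of_mem (hU.mem_nhds hq) hgdef)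
  -- key pointwise identity: g_* Ŷ = - h_* Y on U
  have step1 : ∀ q ∈ U, fderiv ℝ g q (Yhat q) = -(fderiv ℝ h q (Y q)) := by
    intro q hq
    rw [hfg q hq, hYhat q hq, map_smul,
      (key_lemma U hU h hh X Y hXs hYs hXunit hYunit hXY hdiag hq).1, smul_smul,
      mul_neg, inv_mul_cancel₀ (hYgeo q hq), ← neg_one_smul ℝ (fderiv ℝ h q (Y q))]
  refine ⟨?_, ?_, ?_⟩
  · rw [step1 p hp, norm_neg, hYunit p hp]
  · have hev2 : (fun q => fderiv ℝ g q (Yhat q)) =ᶠ[nhds p]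
        (fun q => -(fderiv ℝ h q (Y q))) :=
      Filter.eventuallyEq_of_mem (hU.mem_nhds hp) step1
    rw [hev2.fderiv_eq, fderiv_fun_neg, ContinuousLinearMap.neg_apply,
      (key_lemma U hU h hh X Y hXs hYs hXunit hYunit hXY hdiag hp).2, neg_smul, neg_neg,
      hgdef p hp]
  · rw [step1 p hp, hfg p hp, inner_neg_right]
    exact neg_ne_zero.mpr (hXgeo p hp)
end

section
/- Let f : M^n → Q^{n+1} be an oriented hypersurface of a space form with shape operator A, and D a curvature-invariant distribution of rank k on M (R(X,Y)Z ∈ D for all X,Y,Z ∈ D). Then at every point one of the following holds: (i) A(D) ⊆ D^⊥; (ii) A(D) ⊆ D; (iii) the intersection of D with the relative nullity subspace Δ = ker A has dimension k − 1. -/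
open scoped RealInnerProductSpace

/-- Proposition 11 (pointwise form): if `A` is a self-adjoint endomorphism of `ℝⁿ` (the shape
operator of an oriented hypersurface of a space form) and `D` is a `k`-dimensional subspace
that is curvature-invariant, i.e. `⟨A y, z⟩ • A x − ⟨A x, z⟩ • A y ∈ D` for all
`x, y, z ∈ D`, then `A(D) ⊆ D^⊥`, or `A(D) ⊆ D`, or `dim (D ∩ ker A) = k − 1`. -/
theorem stmt_14 {n k : ℕ}
    (A : EuclideanSpace ℝ (Fin n) →ₗ[ℝ] EuclideanSpace ℝ (Fin n))
    (hA : A.IsSymmetric)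
    (D : Submodule ℝ (EuclideanSpace ℝ (Fin n)))
    (hk : Module.finrank ℝ D = k)
    (hinv : ∀ x ∈ D, ∀ y ∈ D, ∀ z ∈ D, ⟪A y, z⟫ • A x - ⟪A x, z⟫ • A y ∈ D) :
    (∀ x ∈ D, A x ∈ Dᗮ) ∨ (∀ x ∈ D, A x ∈ D) ∨
      Module.finrank ℝ ↥(D ⊓ LinearMap.ker A) = k - 1 := by
  by_cases h1 : ∀ x ∈ D, ∀ z ∈ D, ⟪A x, z⟫ = 0
  · left
    intro x hx
    rw [Submodule.mem_orthogonal]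
    intro u hu
    rw [real_inner_comm]
    exact h1 x hx u hu
  by_cases h2 : ∀ x ∈ D, A x ∈ D
  · exact Or.inr (Or.inl h2)
  right; right
  push_neg at h1 h2
  obtain ⟨x0, hx0, z0, hz0, hB0⟩ := h1
  obtain ⟨x1, hx1, hAx1⟩ := h2
  -- find z1 ∈ D with ⟪A x1, z1⟫ ≠ 0
  obtain ⟨z1, hz1, hc⟩ : ∃ z1 ∈ D, ⟪A x1, z1⟫ ≠ 0 := by
    by_contra h
    push_neg at h
    have h3 := hinv x1 hx1 x0 hx0 z0 hz0
    rw [h z0 hz0, zero_smul, sub_zero] at h3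
    exact hAx1 ((D.smul_mem_iff hB0).mp h3)
  -- key: if y ∈ D and ⟪A y, z1⟫ = 0 then A y = 0
  have key : ∀ y ∈ D, ⟪A y, z1⟫ = 0 → A y = 0 := by
    intro y hy hyz
    have hAyD : A y ∈ D := by
      have h3 := hinv y hy x1 hx1 z1 hz1
      rw [hyz, zero_smul, sub_zero] at h3
      exact (D.smul_mem_iff hc).mp h3
    have hperp : ∀ z ∈ D, ⟪A y, z⟫ = 0 := by
      intro z hz
      by_contra hne
      have h3 := hinv x1 hx1 y hy z hz
      have h4 : (⟪A y, z⟫ : ℝ) • A x1 ∈ D := by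
        have := D.add_mem h3 (D.smul_mem (⟪A x1, z⟫) hAyD)
        simpa [sub_add_cancel] using this
      exact hAx1 ((D.smul_mem_iff hne).mp h4)
    have := hperp (A y) hAyD
    exact inner_self_eq_zero.mp this
  -- the functional φ y = ⟪A y, z1⟫  (written as ⟪z1, A y⟫ via innerSL)
  set φ : EuclideanSpace ℝ (Fin n) →ₗ[ℝ] ℝ :=
    ((innerSL ℝ z1).toLinearMap).comp A with hφdef
  have hφ : ∀ y, φ y = ⟪A y, z1⟫ := by
    intro y
    simp only [hφdef, LinearMap.coe_comp, Function.comp_apply,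
      ContinuousLinearMap.coe_coe, innerSL_apply_apply]
    exact real_inner_comm _ _
  have hker : D ⊓ LinearMap.ker A = D ⊓ LinearMap.ker φ := by
    ext y
    simp only [Submodule.mem_inf, LinearMap.mem_ker]
    constructor
    · rintro ⟨hyD, hy0⟩
      refine ⟨hyD, ?_⟩
      rw [hφ, hy0]; simp
    · rintro ⟨hyD, hy0⟩
      rw [hφ] at hy0
      exact ⟨hyD, key y hyD hy0⟩
  set ψ : D →ₗ[ℝ] ℝ := φ.comp D.subtype with hψdef
  have hrange : LinearMap.range ψ = ⊤ := by
    rw [Submodule.eq_top_iff']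
    intro r
    refine ⟨(r / ⟪A x1, z1⟫) • ⟨x1, hx1⟩, ?_⟩
    have : ψ ⟨x1, hx1⟩ = ⟪A x1, z1⟫ := by simp [hψdef, hφ]
    rw [map_smul, this, smul_eq_mul, div_mul_cancel₀ _ hc]
  have hrn := LinearMap.finrank_range_add_finrank_ker ψ
  rw [hrange, finrank_top, Module.finrank_self, hk] at hrn
  have hkerψ : LinearMap.ker ψ = (D ⊓ LinearMap.ker φ).comap D.subtype := by
    rw [hψdef, LinearMap.ker_comp]
    ext y
    simp [Submodule.mem_comap, y.2]
  have hfin : Module.finrank ℝ ↥(D ⊓ LinearMap.ker A) = Module.finrank ℝ (LinearMap.ker ψ) := by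
    have hmc : Submodule.map D.subtype ((D ⊓ LinearMap.ker φ).comap D.subtype)
        = D ⊓ LinearMap.ker φ := by
      rw [Submodule.map_comap_subtype, ← inf_assoc, inf_idem]
    rw [hker, hkerψ, ← Submodule.finrank_map_subtype_eq D
      ((D ⊓ LinearMap.ker φ).comap D.subtype), hmc]
  rw [hfin]
  omega
end

section
/- Let g : L² → S^n be a surface of type D with coordinates (u,v) such that ∂u, ∂v are collinear with the defining vector fields X, Y. Then the position vector of g in ℝ^{n+1} satisfies the hyperbolic PDE g_{uv} + a g_v + b g = 0 for some smooth functions a, b with b = ⟨g_u, g_v⟩; conversely, if an immersion g : U → S^n ⊂ ℝ^{n+1} satisfies g_{uv} + a g_v + b g = 0 with ⟨∂u, ∂v⟩ ≠ 0 everywhere, then ∇^g_{∂u} ∂v ∈ span{∂v} and α_g(∂u, ∂v) = 0, so g is of type D. -/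
open scoped RealInnerProductSpace

section aux

variable {n : ℕ}

/-- If `f` has derivative `d` at `x` and is eventually constant, then `d = 0`. -/
lemma deriv_zero_of_eventually_const {f : ℝ → ℝ} {d : ℝ} {x c : ℝ}
    (hf : HasDerivAt f d x) (h : ∀ᶠ y in nhds x, f y = c) : d = 0 :=
  hf.unique (((hasDerivAt_const x c).congr_of_eventuallyEq h).congr_deriv rfl)

end aux

/-- Coordinate characterization of type `D` surfaces.  For an immersed surface
`g : U → Sⁿ ⊆ ℝ^{n+1}` with `⟨g_u, g_v⟩ ≠ 0`:  (direct) if `∇^g_{∂u} ∂v ∈ span {∂v}`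
(the tangential part of `g_{uv}` lies in `span {g_v}`) and `α_g(∂u, ∂v) = 0`
(`g_{uv}` has no component normal to the sphere tangent plane, i.e.
`g_{uv} ∈ span {g, g_u, g_v}`), then `g_{uv} + a g_v + b g = 0` for some function `a`,
with `b = ⟨g_u, g_v⟩`; (converse) if `g_{uv} + a g_v + b g = 0` for some functions `a, b`,
then both conditions hold, so `g` is of type `D`. -/
theorem stmt_18 {n : ℕ} (U : Set (ℝ × ℝ)) (hU : IsOpen U)
    (g gu gv guv : ℝ × ℝ → EuclideanSpace ℝ (Fin (n + 1)))
    (hg : ContDiffOn ℝ (⊤ : ℕ∞) g U)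
    (hgu : ∀ p ∈ U, HasDerivAt (fun u => g (u, p.2)) (gu p) p.1)
    (hgv : ∀ p ∈ U, HasDerivAt (fun v => g (p.1, v)) (gv p) p.2)
    (hguv : ∀ p ∈ U, HasDerivAt (fun v => gu (p.1, v)) (guv p) p.2)
    (hsph : ∀ p ∈ U, ⟪g p, g p⟫ = 1)
    (himm : ∀ p ∈ U, LinearIndependent ℝ ![gu p, gv p])
    (hb : ∀ p ∈ U, ⟪gu p, gv p⟫ ≠ 0) :
    ((∀ p ∈ U,
        ((Submodule.orthogonalProjectionOnto (Submodule.span ℝ {gu p, gv p}) (guv p) :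
            EuclideanSpace ℝ (Fin (n + 1))) ∈ Submodule.span ℝ {gv p} ∧
          guv p ∈ Submodule.span ℝ {g p, gu p, gv p})) →
      ∃ a : ℝ × ℝ → ℝ, ∀ p ∈ U, guv p + a p • gv p + ⟪gu p, gv p⟫ • g p = 0) ∧
    (∀ a b : ℝ × ℝ → ℝ, (∀ p ∈ U, guv p + a p • gv p + b p • g p = 0) →
      ∀ p ∈ U,
        ((Submodule.orthogonalProjectionOnto (Submodule.span ℝ {gu p, gv p}) (guv p) :
            EuclideanSpace ℝ (Fin (n + 1))) ∈ Submodule.span ℝ {gv p} ∧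
          guv p ∈ Submodule.span ℝ {g p, gu p, gv p})) := by
  -- ⟨g, gu⟩ = 0 on U
  have hgug : ∀ p ∈ U, ⟪g p, gu p⟫ = 0 := by
    intro p hp
    have hopen : ∀ᶠ u in nhds p.1, (u, p.2) ∈ U := by
      have : Continuous fun u : ℝ => (u, p.2) := by fun_prop
      exact this.continuousAt.preimage_mem_nhds (hU.mem_nhds (by simpa using hp))
    have hd : HasDerivAt (fun u => ⟪g (u, p.2), g (u, p.2)⟫)
        (⟪g (p.1, p.2), gu p⟫ + ⟪gu p, g (p.1, p.2)⟫) p.1 :=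
      HasDerivAt.inner ℝ (hgu p hp) (hgu p hp)
    have := deriv_zero_of_eventually_const hd (hopen.mono fun u hu => hsph _ hu)
    have hp' : g (p.1, p.2) = g p := by rw [Prod.mk.eta]
    rw [hp', real_inner_comm (gu p) (g p)] at this
    rw [real_inner_comm]
    linarith
  -- ⟨g, gv⟩ = 0 on U
  have hgvg : ∀ p ∈ U, ⟪g p, gv p⟫ = 0 := by
    intro p hp
    have hopen : ∀ᶠ v in nhds p.2, (p.1, v) ∈ U := by
      have : Continuous fun v : ℝ => (p.1, v) := by fun_prop
      exact this.continuousAt.preimage_mem_nhds (hU.mem_nhds (by simpa using hp))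
    have hd : HasDerivAt (fun v => ⟪g (p.1, v), g (p.1, v)⟫)
        (⟪g (p.1, p.2), gv p⟫ + ⟪gv p, g (p.1, p.2)⟫) p.2 :=
      HasDerivAt.inner ℝ (hgv p hp) (hgv p hp)
    have := deriv_zero_of_eventually_const hd (hopen.mono fun v hv => hsph _ hv)
    have hp' : g (p.1, p.2) = g p := by rw [Prod.mk.eta]
    rw [hp', real_inner_comm (gv p) (g p)] at this
    rw [real_inner_comm]
    linarith
  -- ⟨guv, g⟩ = -⟨gu, gv⟩ on U
  have hguvg : ∀ p ∈ U, ⟪guv p, g p⟫ = -⟪gu p, gv p⟫ := by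
    intro p hp
    have hopen : ∀ᶠ v in nhds p.2, (p.1, v) ∈ U := by
      have : Continuous fun v : ℝ => (p.1, v) := by fun_prop
      exact this.continuousAt.preimage_mem_nhds (hU.mem_nhds (by simpa using hp))
    have hd : HasDerivAt (fun v => ⟪gu (p.1, v), g (p.1, v)⟫)
        (⟪gu (p.1, p.2), gv p⟫ + ⟪guv p, g (p.1, p.2)⟫) p.2 :=
      HasDerivAt.inner ℝ (hguv p hp) (hgv p hp)
    have hzero := deriv_zero_of_eventually_const hd
      (hopen.mono fun v hv => by
        rw [real_inner_comm]; exact hgug _ hv)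
    have hp' : (p.1, p.2) = p := Prod.mk.eta
    rw [hp'] at hzero
    linarith
  -- projection of g onto span{gu, gv} is 0
  have hprojg : ∀ p ∈ U, Submodule.orthogonalProjectionOnto (Submodule.span ℝ {gu p, gv p}) (g p) = 0 := by
    intro p hp
    rw [Submodule.orthogonalProjectionOnto_eq_zero_iff]
    intro x hx
    induction hx using Submodule.span_induction with
    | mem x hx =>
        rcases hx with h | h
        · rw [h, real_inner_comm]; exact hgug p hp
        · rw [Set.mem_singleton_iff.mp h, real_inner_comm]; exact hgvg p hp
    | zero => simp
    | add x y _ _ hx hy => rw [inner_add_left, hx, hy, add_zero]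
    | smul c x _ hx => rw [inner_smul_left, hx, mul_zero]
  constructor
  · -- direct implication
    intro hD
    have key : ∀ p ∈ U, ∃ c : ℝ, guv p + c • gv p + ⟪gu p, gv p⟫ • g p = 0 := by
      intro p hp
      obtain ⟨hproj, hmem⟩ := hD p hp
      have : ({g p, gu p, gv p} : Set (EuclideanSpace ℝ (Fin (n + 1)))) =
          insert (g p) {gu p, gv p} := rfl
      rw [this, Submodule.mem_span_insert] at hmem
      obtain ⟨α, z, hz, hguvz⟩ := hmem
      rw [Submodule.mem_span_pair] at hz
      obtain ⟨β, γ, hzeq⟩ := hz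
      -- compute the projection
      have hK : Submodule.span ℝ ({gu p, gv p} : Set (EuclideanSpace ℝ (Fin (n + 1)))) =
          Submodule.span ℝ {gu p, gv p} := rfl
      have hzmem : z ∈ Submodule.span ℝ ({gu p, gv p} : Set (EuclideanSpace ℝ (Fin (n + 1)))) := by
        rw [Submodule.mem_span_pair]; exact ⟨β, γ, hzeq⟩
      have hprojguv : (Submodule.orthogonalProjectionOnto (Submodule.span ℝ {gu p, gv p}) (guv p) :
          EuclideanSpace ℝ (Fin (n + 1))) = z := by
        rw [hguvz, map_add, map_smul, hprojg p hp, smul_zero, zero_add]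
        exact Submodule.starProjection_eq_self_iff.mpr hzmem
      rw [hprojguv] at hproj
      rw [Submodule.mem_span_singleton] at hproj
      obtain ⟨c, hc⟩ := hproj
      -- β = 0 from linear independence
      have hβ : β • gu p + (γ - c) • gv p = 0 := by
        rw [sub_smul]
        have : z = c • gv p := hc.symm
        rw [← hzeq] at this
        rw [← this]; abel
      have hli := (LinearIndependent.pair_iff.mp (himm p hp)) β (γ - c) hβ
      have hβ0 : β = 0 := hli.1
      -- α = ⟨guv, g⟩ = -⟨gu, gv⟩
      have hα : α = -⟪gu p, gv p⟫ := by
        have h1 := hguvg p hp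
        rw [hguvz, ← hzeq, hβ0, zero_smul, zero_add, inner_add_left,
          real_inner_smul_left, real_inner_smul_left, hsph p hp,
          real_inner_comm (g p) (gv p), hgvg p hp] at h1
        linarith
      refine ⟨-γ, ?_⟩
      rw [hguvz, ← hzeq, hβ0, hα]
      module
    choose c hc using key
    classical
    exact ⟨fun p => if hp : p ∈ U then c p hp else 0,
      fun p hp => by simpa [dif_pos hp] using hc p hp⟩
  · -- converse
    intro a b hpde p hp
    have heq : guv p = (-a p) • gv p + (-b p) • g p := by
      linear_combination (norm := module) hpde p hp
    constructor
    · have hgvmem : gv p ∈ Submodule.span ℝ ({gu p, gv p} : Set (EuclideanSpace ℝ (Fin (n + 1)))) :=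
        Submodule.subset_span (by simp)
      have hpgv : ((Submodule.orthogonalProjectionOnto (Submodule.span ℝ {gu p, gv p})) (gv p) :
          EuclideanSpace ℝ (Fin (n + 1))) = gv p :=
        Submodule.starProjection_eq_self_iff.mpr hgvmem
      rw [heq, map_add, map_smul, map_smul, hprojg p hp, smul_zero, add_zero,
        Submodule.coe_smul, hpgv]
      exact Submodule.smul_mem _ _ (Submodule.mem_span_singleton_self _)
    · rw [heq]
      refine Submodule.add_mem _ (Submodule.smul_mem _ _ ?_) (Submodule.smul_mem _ _ ?_)
      · exact Submodule.subset_span (by simp)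
      · exact Submodule.subset_span (by simp)
end
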